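/- arXiv:2009.07651 — 9 statements merged into one kernel-verified Lean document; each statement's English description precedes it below -/
import Mathlib

section
/- Let G be a K_{s,t}-saturated n by n bipartite graph (1 ≤ s < t) whose minimum degree δ satisfies δ < t-1. Then G has at least (s+t-2)n - (t-1)(t-2) edges. -/
open Finset

/-- An `n` by `n` bipartite graph, given by its edge set `E ⊆ U × U'`,
contains a copy of the complete bipartite graph with `a` vertices in `U`
and `b` vertices in `U'`. -/
def ContainsK (n : ℕ) (E : Finset (Fin n × Fin n)) (a b : ℕ) : Prop :=
  ∃ S T : Finset (Fin n), S.card = a ∧ T.card = b ∧ ∀ u ∈ S, ∀ v ∈ T, (u, v) ∈ E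

/-- Contains an (unordered) copy of `K_{s,t}`. -/
def ContainsKst (n : ℕ) (E : Finset (Fin n × Fin n)) (s t : ℕ) : Prop :=
  ContainsK n E s t ∨ ContainsK n E t s

/-- `K_{s,t}`-saturated: `K_{s,t}`-free, but adding any missing edge across
the bipartition creates a copy of `K_{s,t}`. -/
def SaturatedKst (n : ℕ) (E : Finset (Fin n × Fin n)) (s t : ℕ) : Prop :=
  ¬ ContainsKst n E s t ∧
    ∀ u v : Fin n, (u, v) ∉ E → ContainsKst n (insert (u, v) E) s t

/-- Degree of a vertex `u` on the `U` side. -/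
def degU (n : ℕ) (E : Finset (Fin n × Fin n)) (u : Fin n) : ℕ :=
  (E.filter (fun p => p.1 = u)).card

/-- Degree of a vertex `v` on the `U'` side. -/
def degV (n : ℕ) (E : Finset (Fin n × Fin n)) (v : Fin n) : ℕ :=
  (E.filter (fun p => p.2 = v)).card

section Aux
variable {n s t : ℕ}

lemma mem_swapE (E : Finset (Fin n × Fin n)) (p : Fin n × Fin n) :
    p ∈ E.map (Equiv.prodComm (Fin n) (Fin n)).toEmbedding ↔ p.swap ∈ E := by
  rw [Finset.mem_map_equiv]; rfl

lemma containsK_swap (E : Finset (Fin n × Fin n)) (a b : ℕ) :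
    ContainsK n (E.map (Equiv.prodComm (Fin n) (Fin n)).toEmbedding) a b ↔ ContainsK n E b a := by
  constructor
  · rintro ⟨S, T, hS, hT, h⟩
    exact ⟨T, S, hT, hS, fun v hv u hu => (mem_swapE E (u, v)).mp (h u hu v hv)⟩
  · rintro ⟨S, T, hS, hT, h⟩
    exact ⟨T, S, hT, hS, fun v hv u hu => (mem_swapE E (v, u)).mpr (h u hu v hv)⟩

lemma containsKst_swap (E : Finset (Fin n × Fin n)) :
    ContainsKst n (E.map (Equiv.prodComm (Fin n) (Fin n)).toEmbedding) s t ↔ ContainsKst n E s t := by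
  unfold ContainsKst
  rw [containsK_swap, containsK_swap]
  tauto

lemma saturated_swap (E : Finset (Fin n × Fin n)) (h : SaturatedKst n E s t) :
    SaturatedKst n (E.map (Equiv.prodComm (Fin n) (Fin n)).toEmbedding) s t := by
  constructor
  · rw [containsKst_swap]; exact h.1
  · intro u v huv
    have hvu : (v, u) ∉ E := by
      intro hc
      exact huv ((mem_swapE E (u, v)).mpr hc)
    have h2 := h.2 v u hvu
    have : insert (u, v) (E.map (Equiv.prodComm (Fin n) (Fin n)).toEmbedding)
        = (insert (v, u) E).map (Equiv.prodComm (Fin n) (Fin n)).toEmbedding := by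
      rw [Finset.map_insert]; rfl
    rw [this, containsKst_swap]
    exact h2

lemma degU_swap (E : Finset (Fin n × Fin n)) (u : Fin n) :
    degU n (E.map (Equiv.prodComm (Fin n) (Fin n)).toEmbedding) u = degV n E u := by
  unfold degU degV
  rw [Finset.filter_map, Finset.card_map]
  congr 1


lemma degU_eq_nbhd (E : Finset (Fin n × Fin n)) (u : Fin n) :
    degU n E u = (univ.filter fun v => (u, v) ∈ E).card := by
  unfold degU
  rw [show E.filter (fun p => p.1 = u)
      = (univ.filter fun v => (u, v) ∈ E).image (fun v => (u, v)) by
    ext ⟨a, b⟩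
    simp only [Finset.mem_filter, Finset.mem_image, Finset.mem_univ, true_and, Prod.mk.injEq]
    constructor
    · rintro ⟨hE, rfl⟩; exact ⟨b, hE, rfl, rfl⟩
    · rintro ⟨v, hv, rfl, rfl⟩; exact ⟨hv, rfl⟩]
  rw [Finset.card_image_of_injective _ (fun a b h => by simpa using h)]

end Aux

section Aux2
variable {n s t : ℕ}

lemma card_le_degU (E : Finset (Fin n × Fin n)) (u : Fin n) (T : Finset (Fin n))
    (h : ∀ b ∈ T, (u, b) ∈ E) : T.card ≤ degU n E u := by
  unfold degU
  apply Finset.card_le_card_of_injOn (fun b => (u, b))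
  · intro b hb; simp [h b hb]
  · intro b _ c _ hbc; simpa using hbc

lemma extract {E : Finset (Fin n × Fin n)} (hfree : ¬ ContainsKst n E s t) {u v : Fin n}
    (hadd : ContainsKst n (insert (u, v) E) s t) :
    ∃ S T : Finset (Fin n), u ∈ S ∧ v ∈ T ∧
      ((S.card = s ∧ T.card = t) ∨ (S.card = t ∧ T.card = s)) ∧
      ∀ a ∈ S, ∀ b ∈ T, (a, b) = (u, v) ∨ (a, b) ∈ E := by
  have key : ∀ (S T : Finset (Fin n)), (∀ a ∈ S, ∀ b ∈ T, (a, b) ∈ insert (u, v) E) →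
      (u ∈ S ∧ v ∈ T ∧ ∀ a ∈ S, ∀ b ∈ T, (a, b) = (u, v) ∨ (a, b) ∈ E) ∨
      (∀ a ∈ S, ∀ b ∈ T, (a, b) ∈ E) := by
    intro S T h
    by_cases hc : u ∈ S ∧ v ∈ T
    · left
      refine ⟨hc.1, hc.2, fun a ha b hb => ?_⟩
      rcases Finset.mem_insert.mp (h a ha b hb) with h' | h'
      · exact Or.inl h'
      · exact Or.inr h'
    · right
      intro a ha b hb
      rcases Finset.mem_insert.mp (h a ha b hb) with h' | h'
      · exfalso
        have h2 : a = u ∧ b = v := Prod.mk.injEq a b u v ▸ h'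
        exact hc ⟨h2.1 ▸ ha, h2.2 ▸ hb⟩
      · exact h'
  rcases hadd with ⟨S, T, hS, hT, h⟩ | ⟨S, T, hS, hT, h⟩
  · rcases key S T h with ⟨h1, h2, h3⟩ | hall
    · exact ⟨S, T, h1, h2, Or.inl ⟨hS, hT⟩, h3⟩
    · exact absurd (Or.inl ⟨S, T, hS, hT, hall⟩) hfree
  · rcases key S T h with ⟨h1, h2, h3⟩ | hall
    · exact ⟨S, T, h1, h2, Or.inr ⟨hS, hT⟩, h3⟩
    · exact absurd (Or.inr ⟨S, T, hS, hT, hall⟩) hfree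

lemma nbrs_of_extract {E : Finset (Fin n × Fin n)} {u v : Fin n} {T : Finset (Fin n)}
    (hvT : v ∈ T) (h : ∀ b ∈ T, (u, b) = (u, v) ∨ (u, b) ∈ E) :
    T.card - 1 ≤ degU n E u := by
  have := card_le_degU E u (T.erase v) (fun b hb => by
    rcases h b (Finset.mem_of_mem_erase hb) with h' | h'
    · exact absurd (by simpa using h' : b = v) (Finset.ne_of_mem_erase hb)
    · exact h')
  rwa [Finset.card_erase_of_mem hvT] at this

lemma min_deg (hs : 1 ≤ s) (hst : s < t) (hn : t ≤ n) (E : Finset (Fin n × Fin n))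
    (hsat : SaturatedKst n E s t) (u : Fin n) : s - 1 ≤ degU n E u := by
  by_cases hall : ∀ v, (u, v) ∈ E
  · have h1 : (univ : Finset (Fin n)).card ≤ degU n E u :=
      card_le_degU _ _ _ (fun b _ => hall b)
    simp only [Finset.card_univ, Fintype.card_fin] at h1
    omega
  · push_neg at hall
    obtain ⟨v, hv⟩ := hall
    obtain ⟨S, T, huS, hvT, hcard, h⟩ := extract hsat.1 (hsat.2 u v hv)
    have h2 := nbrs_of_extract hvT (fun b hb => h u huS b hb)
    rcases hcard with ⟨_, h3⟩ | ⟨_, h3⟩ <;> omega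

lemma extract' (hst : s < t) {E : Finset (Fin n × Fin n)} (hsat : SaturatedKst n E s t)
    {u : Fin n} (hd : degU n E u < t - 1) {v : Fin n} (hv : (u, v) ∉ E) :
    ∃ S T : Finset (Fin n), u ∈ S ∧ v ∈ T ∧ S.card = t ∧ T.card = s ∧
      ∀ a ∈ S, ∀ b ∈ T, (a, b) = (u, v) ∨ (a, b) ∈ E := by
  obtain ⟨S, T, huS, hvT, hcard, h⟩ := extract hsat.1 (hsat.2 u v hv)
  have h2 := nbrs_of_extract hvT (fun b hb => h u huS b hb)
  rcases hcard with ⟨h3, h4⟩ | ⟨h3, h4⟩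
  · omega
  · exact ⟨S, T, huS, hvT, h3, h4, h⟩

end Aux2
section Main
variable {n s t : ℕ}

lemma mainU (hs : 1 ≤ s) (hst : s < t) (hn : t ≤ n) (E : Finset (Fin n × Fin n))
    (hsat : SaturatedKst n E s t) (u : Fin n) (hd : degU n E u < t - 1) :
    (s + t - 2) * n ≤ E.card + (t - 1) * (t - 2) := by
  classical
  -- choose the forced copies
  have hch : ∀ v : Fin n, ∃ ST : Finset (Fin n) × Finset (Fin n),
      (u, v) ∉ E → (u ∈ ST.1 ∧ v ∈ ST.2 ∧ ST.1.card = t ∧ ST.2.card = s ∧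
        ∀ a ∈ ST.1, ∀ b ∈ ST.2, (a, b) = (u, v) ∨ (a, b) ∈ E) := by
    intro v
    by_cases hv : (u, v) ∈ E
    · exact ⟨(∅, ∅), fun h => absurd hv h⟩
    · obtain ⟨S, T, h1, h2, h3, h4, h5⟩ := extract' hst hsat hd hv
      exact ⟨(S, T), fun _ => ⟨h1, h2, h3, h4, h5⟩⟩
  choose ST hST using hch
  set W : Finset (Fin n) := univ.filter (fun v => (u, v) ∉ E) with hWdef
  have hWmem : ∀ v, v ∈ W ↔ (u, v) ∉ E := by
    intro v; simp [hWdef]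
  set A : Fin n → Finset (Fin n) := fun v => (ST v).1.erase u with hAdef
  have hAcard : ∀ v ∈ W, (A v).card = t - 1 := by
    intro v hv
    obtain ⟨h1, _, h3, _, _⟩ := hST v ((hWmem v).mp hv)
    simp [hAdef, Finset.card_erase_of_mem h1, h3]
  -- every a ∈ A v is adjacent to v and to all of (ST v).2
  have hAadjT : ∀ v ∈ W, ∀ a ∈ A v, ∀ b ∈ (ST v).2, (a, b) ∈ E := by
    intro v hv a ha b hb
    obtain ⟨h1, h2, h3, h4, h5⟩ := hST v ((hWmem v).mp hv)
    rcases h5 a (Finset.mem_of_mem_erase ha) b hb with h' | h'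
    · exact absurd (congrArg Prod.fst h') (Finset.ne_of_mem_erase ha)
    · exact h'
  have hAadj : ∀ v ∈ W, ∀ a ∈ A v, (a, v) ∈ E := by
    intro v hv a ha
    exact hAadjT v hv a ha v ((hST v ((hWmem v).mp hv)).2.1)
  -- T v minus v lies in the neighborhood of u
  have hTN : ∀ v ∈ W, ∀ b ∈ ((ST v).2).erase v, (u, b) ∈ E := by
    intro v hv b hb
    obtain ⟨h1, h2, h3, h4, h5⟩ := hST v ((hWmem v).mp hv)
    rcases h5 u h1 b (Finset.mem_of_mem_erase hb) with h' | h'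
    · exact absurd (congrArg Prod.snd h') (Finset.ne_of_mem_erase hb)
    · exact h'
  set w : Fin n → ℕ := fun x => (W.filter (fun v => x ∈ A v)).card with hwdef
  -- counting 1: ∑_{x ≠ u} w x = (t-1) * |W|
  have hsum : ∑ x ∈ univ.erase u, w x = (t - 1) * W.card := by
    have h1 : ∀ x, w x = ∑ v ∈ W, if x ∈ A v then 1 else 0 := by
      intro x; exact Finset.card_filter _ _
    calc ∑ x ∈ univ.erase u, w x
        = ∑ x ∈ univ.erase u, ∑ v ∈ W, if x ∈ A v then 1 else 0 := by
          exact Finset.sum_congr rfl (fun x _ => h1 x)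
      _ = ∑ v ∈ W, ∑ x ∈ univ.erase u, if x ∈ A v then 1 else 0 := Finset.sum_comm
      _ = ∑ v ∈ W, ((univ.erase u).filter (fun x => x ∈ A v)).card := by
          exact Finset.sum_congr rfl (fun v _ => (Finset.card_filter _ _).symm)
      _ = ∑ v ∈ W, (A v).card := by
          refine Finset.sum_congr rfl (fun v hv => ?_)
          congr 1
          ext x
          simp only [Finset.mem_filter, Finset.mem_erase, Finset.mem_univ, and_true, true_and]
          constructor
          · exact fun h => h.2
          · intro h
            exact ⟨Finset.ne_of_mem_erase h, h⟩
      _ = ∑ v ∈ W, (t - 1) := Finset.sum_congr rfl hAcard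
      _ = (t - 1) * W.card := by rw [Finset.sum_const, smul_eq_mul, mul_comm]
  -- bound 2
  have hbd : ∀ x ∈ univ.erase u, w x + (s - 1) ≤ degU n E x := by
    intro x hx
    by_cases hw0 : w x = 0
    · rw [hw0, zero_add]
      exact min_deg hs hst hn E hsat x
    · have : (W.filter (fun v => x ∈ A v)).Nonempty := by
        rw [← Finset.card_pos]
        exact Nat.pos_of_ne_zero hw0
      obtain ⟨v0, hv0⟩ := this
      have hv0W : v0 ∈ W := (Finset.mem_filter.mp hv0).1
      have hxA : x ∈ A v0 := (Finset.mem_filter.mp hv0).2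
      have hdisj : Disjoint (W.filter (fun v => x ∈ A v)) (((ST v0).2).erase v0) := by
        rw [Finset.disjoint_left]
        intro b hb hb'
        have hbW : b ∈ W := (Finset.mem_filter.mp hb).1
        exact ((hWmem b).mp hbW) (hTN v0 hv0W b hb')
      have hcardU : ((W.filter (fun v => x ∈ A v)) ∪ ((ST v0).2).erase v0).card
          = w x + (s - 1) := by
        rw [Finset.card_union_of_disjoint hdisj, Finset.card_erase_of_mem
          ((hST v0 ((hWmem v0).mp hv0W)).2.1), (hST v0 ((hWmem v0).mp hv0W)).2.2.2.1]
      rw [← hcardU]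
      apply card_le_degU
      intro b hb
      rcases Finset.mem_union.mp hb with hb' | hb'
      · have hbW : b ∈ W := (Finset.mem_filter.mp hb').1
        exact hAadj b hbW x (Finset.mem_filter.mp hb').2
      · exact hAadjT v0 hv0W x hxA b (Finset.mem_of_mem_erase hb')
  -- total count
  have hEcard : E.card = ∑ x : Fin n, degU n E x := by
    exact Finset.card_eq_sum_card_fiberwise (fun p _ => Finset.mem_univ p.1)
  have hsplit : ∑ x : Fin n, degU n E x = degU n E u + ∑ x ∈ univ.erase u, degU n E x :=
    (Finset.add_sum_erase univ _ (Finset.mem_univ u)).symm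
  have hge : (t - 1) * W.card + (s - 1) * (n - 1) ≤ ∑ x ∈ univ.erase u, degU n E x := by
    calc (t - 1) * W.card + (s - 1) * (n - 1)
        = ∑ x ∈ univ.erase u, w x + (s - 1) * (n - 1) := by rw [hsum]
      _ = ∑ x ∈ univ.erase u, (w x + (s - 1)) := by
          rw [Finset.sum_add_distrib, Finset.sum_const, smul_eq_mul,
            Finset.card_erase_of_mem (Finset.mem_univ u), Finset.card_univ,
            Fintype.card_fin, mul_comm]
      _ ≤ ∑ x ∈ univ.erase u, degU n E x := Finset.sum_le_sum hbd
  -- |W| = n - degU u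
  have hWcard : W.card + degU n E u = n := by
    have hdisj : Disjoint W (univ.filter (fun v => (u, v) ∈ E)) := by
      rw [Finset.disjoint_left]
      intro a ha hb
      exact ((hWmem a).mp ha) ((Finset.mem_filter.mp hb).2)
    have hun : W ∪ univ.filter (fun v => (u, v) ∈ E) = univ := by
      ext a
      simp only [Finset.mem_union, Finset.mem_filter, Finset.mem_univ, true_and, iff_true]
      by_cases h : (u, a) ∈ E
      · exact Or.inr h
      · exact Or.inl ((hWmem a).mpr h)
    rw [degU_eq_nbhd, ← Finset.card_union_of_disjoint hdisj, hun, Finset.card_univ,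
      Fintype.card_fin]
  -- arithmetic endgame
  have hEbig : degU n E u + ((t - 1) * (n - degU n E u) + (s - 1) * (n - 1)) ≤ E.card := by
    have hW' : W.card = n - degU n E u := by omega
    rw [hW'] at hge
    omega
  have hd2 : degU n E u ≤ t - 2 := by omega
  have h2t : 2 ≤ t := by omega
  set d := degU n E u with hddef
  have hdn : d ≤ n := by omega
  have h1n : (1:ℕ) ≤ n := by omega
  zify [hdn, h1n, hs, show 1 ≤ t by omega, h2t, show 2 ≤ s + t by omega,
    show 2 ≤ t by omega] at hEbig hd2 ⊢
  have hsz : (s:ℤ) ≤ (t:ℤ) - 1 := by omega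
  have hnz : (t:ℤ) ≤ (n:ℤ) := by omega
  nlinarith [mul_nonneg (by linarith : (0:ℤ) ≤ (t:ℤ) - 2)
    (by linarith : (0:ℤ) ≤ (t:ℤ) - 2 - (d:ℤ)), hEbig, hd2, hsz, hnz]

end Main

/-- a `K_{s,t}`-saturated `n` by `n` bipartite graph whose minimum
degree is less than `t - 1` has at least `(s+t-2)n - (t-1)(t-2)` edges. -/
theorem stmt1 (s t n : ℕ) (hs : 1 ≤ s) (hst : s < t) (hn : t ≤ n)
    (E : Finset (Fin n × Fin n)) (hsat : SaturatedKst n E s t)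
    (hmin : (∃ u : Fin n, degU n E u < t - 1) ∨ (∃ v : Fin n, degV n E v < t - 1)) :
    (s + t - 2) * n ≤ E.card + (t - 1) * (t - 2) := by
  rcases hmin with ⟨u, hu⟩ | ⟨v, hv⟩
  · exact mainU hs hst hn E hsat u hu
  · have hsat' := saturated_swap E hsat
    have hv' : degU n (E.map (Equiv.prodComm (Fin n) (Fin n)).toEmbedding) v < t - 1 := by
      rw [degU_swap]; exact hv
    have := mainU hs hst hn _ hsat' v hv'
    rwa [Finset.card_map] at this
end

section
/- Let G be a bipartite graph with parts U, U' of size n, having at most (s+t-2)n edges and minimum degree at least t-1. Suppose R_big ⊆ U with |R_big| ≥ n - m and R_small ⊆ U' with |R_small| ≤ m, and every vertex of R_big has at least s-1 neighbors in R_small. Then the number of vertices of R_big with strictly more than s-1 neighbors in R_small, plus the number of vertices of U' \ R_small with degree strictly more than t-1, is at most (t-1)m + (s-1)m + (t-1)(n - |R_big|). -/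
open Finset

lemma aux_sum_lb {α : Type*} [DecidableEq α] (S : Finset α) (f : α → ℕ) (c : ℕ)
    (h : ∀ x ∈ S, c ≤ f x) :
    c * S.card + (S.filter fun x => c < f x).card ≤ ∑ x ∈ S, f x := by
  classical
  have h1 : c * S.card + (S.filter fun x => c < f x).card
      = ∑ x ∈ S, (c + if c < f x then 1 else 0) := by
    rw [Finset.sum_add_distrib, Finset.sum_const, smul_eq_mul, mul_comm,
      ← Finset.card_filter]
  rw [h1]
  apply Finset.sum_le_sum
  intro x hx
  have := h x hx
  split_ifs with hc <;> omega

/-- quantitative version of Observation 2.2. -/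
theorem stmt2 (s t n m : ℕ) (hs : 1 ≤ s) (hst : s < t) (hm : m < n)
    (E : Finset (Fin n × Fin n))
    (hedges : E.card ≤ (s + t - 2) * n)
    (hminU : ∀ u : Fin n, t - 1 ≤ degU n E u)
    (hminV : ∀ v : Fin n, t - 1 ≤ degV n E v)
    (Rbig : Finset (Fin n)) (Rsmall : Finset (Fin n))
    (hbig : n - m ≤ Rbig.card) (hsmall : Rsmall.card ≤ m)
    (hnbr : ∀ u ∈ Rbig, s - 1 ≤ (Rsmall.filter (fun v => (u, v) ∈ E)).card) :
    (Rbig.filter (fun u => s - 1 < (Rsmall.filter (fun v => (u, v) ∈ E)).card)).card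
      + ((univ \ Rsmall).filter (fun v => t - 1 < degV n E v)).card
      ≤ (t - 1) * m + (s - 1) * m + (t - 1) * (n - Rbig.card) := by
  classical
  set a := s - 1 with ha
  set b := t - 1 with hb
  have hE : E.card = ∑ v : Fin n, degV n E v := by
    exact Finset.card_eq_sum_card_fiberwise (f := Prod.snd) (t := univ) (fun p _ => mem_univ _)
  set F : Finset (Fin n × Fin n) := E.filter (fun p => p.1 ∈ Rbig ∧ p.2 ∈ Rsmall) with hFdef
  have hF1 : F.card = ∑ u ∈ Rbig, (Rsmall.filter fun v => (u, v) ∈ E).card := by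
    rw [Finset.card_eq_sum_card_fiberwise (f := Prod.fst) (t := Rbig)
      (fun p hp => (mem_filter.mp hp).2.1)]
    apply Finset.sum_congr rfl
    intro u hu
    have himg : (F.filter fun p => p.1 = u)
        = (Rsmall.filter fun v => (u, v) ∈ E).image (fun v => (u, v)) := by
      ext p
      simp only [hFdef, mem_filter, mem_image, Finset.filter_filter]
      constructor
      · rintro ⟨hpE, ⟨hp1, hp2⟩, h1⟩
        refine ⟨p.2, ⟨hp2, ?_⟩, ?_⟩
        · rw [← h1]; exact hpE
        · rw [← h1]
      · rintro ⟨v, ⟨hv, he⟩, rfl⟩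
        exact ⟨he, ⟨hu, hv⟩, rfl⟩
    rw [himg, Finset.card_image_of_injective _ (fun x y h => by simpa using h)]
  have hF2 : F.card ≤ ∑ v ∈ Rsmall, degV n E v := by
    rw [Finset.card_eq_sum_card_fiberwise (f := Prod.snd) (t := Rsmall)
      (fun p hp => (mem_filter.mp hp).2.2)]
    apply Finset.sum_le_sum
    intro v hv
    apply Finset.card_le_card
    intro p hp
    simp only [hFdef, degV, mem_filter, Finset.filter_filter] at hp ⊢
    exact ⟨hp.1, hp.2.2⟩
  have hsmallsum : a * Rbig.card
      + (Rbig.filter fun u => a < (Rsmall.filter fun v => (u, v) ∈ E).card).card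
      ≤ ∑ v ∈ Rsmall, degV n E v := by
    calc _ ≤ ∑ u ∈ Rbig, (Rsmall.filter fun v => (u, v) ∈ E).card :=
            aux_sum_lb _ _ _ hnbr
      _ = F.card := hF1.symm
      _ ≤ _ := hF2
  have hcardsd : (univ \ Rsmall).card = n - Rsmall.card := by
    rw [Finset.card_sdiff_of_subset (subset_univ _), card_univ, Fintype.card_fin]
  have hbigsum : b * (n - Rsmall.card)
      + ((univ \ Rsmall).filter fun v => b < degV n E v).card
      ≤ ∑ v ∈ univ \ Rsmall, degV n E v := by
    have := aux_sum_lb (univ \ Rsmall) (degV n E) b (fun v _ => hminV v)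
    rwa [hcardsd] at this
  have hsplit : ∑ v ∈ univ \ Rsmall, degV n E v + ∑ v ∈ Rsmall, degV n E v
      = ∑ v : Fin n, degV n E v := Finset.sum_sdiff (subset_univ _)
  have hab : s + t - 2 = a + b := by omega
  have htot : a * Rbig.card
      + (Rbig.filter fun u => a < (Rsmall.filter fun v => (u, v) ∈ E).card).card
      + (b * (n - Rsmall.card)
        + ((univ \ Rsmall).filter fun v => b < degV n E v).card)
      ≤ (a + b) * n := by
    calc _ ≤ ∑ v ∈ Rsmall, degV n E v + ∑ v ∈ univ \ Rsmall, degV n E v :=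
            Nat.add_le_add hsmallsum hbigsum
      _ = E.card := by rw [add_comm, hsplit, ← hE]
      _ ≤ (a + b) * n := by rwa [hab] at hedges
  have hRbig_le : Rbig.card ≤ n := by
    simpa using Finset.card_le_card (subset_univ Rbig)
  have h1 : a * (n - Rbig.card) ≤ a * m := Nat.mul_le_mul_left a (by omega)
  have h2 : b * Rsmall.card ≤ b * m := Nat.mul_le_mul_left b hsmall
  have hmul1 : a * Rbig.card + a * (n - Rbig.card) = a * n := by
    rw [← Nat.mul_add]; congr 1; omega
  have hmul2 : b * (n - Rsmall.card) + b * Rsmall.card = b * n := by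
    rw [← Nat.mul_add]; congr 1
    have : Rsmall.card ≤ n := by omega
    omega
  have hdistr : (a + b) * n = a * n + b * n := Nat.add_mul a b n
  omega
end

section
/- Let G be a bipartite graph with parts U, U', and let R ⊆ U, R' ⊆ U'. Let u ∈ R and u' ∈ R' be such that in the bipartite subgraph induced by (R, R'), there is no path of length at most 3 from u to u'. Suppose that adding the edge uu' to G creates a complete bipartite subgraph K containing both u and u'. Then either K contains no vertex of R other than u, or K contains no vertex of R' other than u'. -/
open Finset

/-- Observation 3.2: if `u ∈ R` and `u' ∈ R'` are at distance more
than `3` in the bipartite graph induced by `(R, R')`, then any complete bipartite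
subgraph `(S, T)` created by adding the edge `uu'` uses no vertex of `R` besides
`u`, or no vertex of `R'` besides `u'`. In a bipartite graph a path from `u` to
`u'` of length at most 3 is either the edge `uu'` itself or a path `u x' x u'`. -/
theorem stmt3 (n m : ℕ) (E : Finset (Fin n × Fin m))
    (R : Finset (Fin n)) (R' : Finset (Fin m))
    (u : Fin n) (u' : Fin m) (hu : u ∈ R) (hu' : u' ∈ R')
    (hnonedge : (u, u') ∉ E)
    (hno3path : ¬ ∃ x ∈ R, ∃ x' ∈ R', (u, x') ∈ E ∧ (x, x') ∈ E ∧ (x, u') ∈ E)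
    (S : Finset (Fin n)) (T : Finset (Fin m))
    (hSu : u ∈ S) (hTu' : u' ∈ T) (hS2 : 2 ≤ S.card) (hT2 : 2 ≤ T.card)
    (hcomplete : ∀ x ∈ S, ∀ y ∈ T, (x, y) ∈ insert (u, u') E) :
    (∀ x ∈ S, x ∈ R → x = u) ∨ (∀ y ∈ T, y ∈ R' → y = u') := by
  by_contra h
  push_neg at h
  obtain ⟨⟨x, hxS, hxR, hxu⟩, ⟨y, hyT, hyR', hyu⟩⟩ := h
  have e1 : (u, y) ∈ E := by
    have := hcomplete u hSu y hyT
    rcases Finset.mem_insert.mp this with h | h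
    · exact absurd (congrArg Prod.snd h) hyu
    · exact h
  have e2 : (x, y) ∈ E := by
    have := hcomplete x hxS y hyT
    rcases Finset.mem_insert.mp this with h | h
    · exact absurd (congrArg Prod.fst h) hxu
    · exact h
  have e3 : (x, u') ∈ E := by
    have := hcomplete x hxS u' hTu'
    rcases Finset.mem_insert.mp this with h | h
    · exact absurd (congrArg Prod.fst h) hxu
    · exact h
  exact hno3path ⟨x, hxR, y, hyR', e1, e2, e3⟩
end

section
/- Let G be an n by n bipartite graph with parts U, U' such that some set S ⊆ U of s-1 vertices is complete to U' (every vertex of S is adjacent to every vertex of U'), every vertex of U \ S has degree exactly t-1, and G is K_{s,t}-free. Then G is K_{s,t}-saturated: adding any missing edge between U and U' creates a copy of K_{s,t}. -/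
open Finset

/-- an `n` by `n` bipartite graph with a set `S ⊆ U` of `s-1`
vertices complete to `U'`, all other vertices of `U` of degree exactly `t-1`,
which is `K_{s,t}`-free, is in fact `K_{s,t}`-saturated. -/
theorem stmt6 (s t n : ℕ) (hs : 1 ≤ s) (hst : s < t) (hn : t ≤ n)
    (E : Finset (Fin n × Fin n))
    (S : Finset (Fin n)) (hScard : S.card = s - 1)
    (hdom : ∀ u ∈ S, ∀ v : Fin n, (u, v) ∈ E)
    (hdeg : ∀ u : Fin n, u ∉ S → degU n E u = t - 1)
    (hfree : ¬ ContainsKst n E s t) :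
    SaturatedKst n E s t := by
  constructor
  · exact hfree
  · intro u v huv
    have huS : u ∉ S := fun h => huv (hdom u h v)
    left
    refine ⟨insert u S, insert v ((E.filter (fun p => p.1 = u)).image Prod.snd), ?_, ?_, ?_⟩
    · rw [card_insert_of_notMem huS, hScard]; omega
    · have hvnot : v ∉ (E.filter (fun p => p.1 = u)).image Prod.snd := by
        intro h
        obtain ⟨p, hp, hp2⟩ := mem_image.mp h
        obtain ⟨hpE, hp1⟩ := mem_filter.mp hp
        exact huv (by have : p = (u, v) := Prod.ext hp1 hp2; rwa [this] at hpE)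
      rw [card_insert_of_notMem hvnot, card_image_of_injOn, ← degU, hdeg u huS]
      · omega
      · intro p hp q hq hpq
        exact Prod.ext ((mem_filter.mp hp).2.trans ((mem_filter.mp hq).2).symm) hpq
    · intro x hx y hy
      rcases mem_insert.mp hx with rfl | hxS
      · rcases mem_insert.mp hy with rfl | hyT
        · exact mem_insert_self _ _
        · obtain ⟨p, hp, hp2⟩ := mem_image.mp hyT
          obtain ⟨hpE, hp1⟩ := mem_filter.mp hp
          have : p = (x, y) := Prod.ext hp1 hp2
          exact mem_insert_of_mem (this ▸ hpE)
      · exact mem_insert_of_mem (hdom x hxS y)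
end

section
/- Let G be a K_{t-1,t}-saturated n by n bipartite graph with exactly (2t-3)n - (t-1)(t-2) edges and minimum degree less than t-1 (with n sufficiently large in terms of t). Then there is a set S of t-2 vertices in one part adjacent to all vertices of the other part, and every other vertex on the same side as S has degree exactly t-1. -/
open Finset

/-
Write `t = k + 2`. A vertex `u₀` of degree below `k + 1` in a `K_{k+1,k+2}`-saturated graph has
degree exactly `k`, and adding any missing edge `u₀v` forces `k + 1` vertices complete to
`N(u₀) ∪ {v}`. Let `X` be the set of vertices complete to `W = N(u₀)`. Every vertex outside `X`
has degree at least `k`, and every vertex outside `W` has at least `k + 1` neighbours in `X`;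
counting edges, these bounds already add up to `(2k + 1)n - k(k + 1)`, so all of them are
equalities. A vertex outside `X` would then have degree `k` and a neighbour outside `W`, and
saturating a missing edge at it yields either a `K_{k+1,k+2}` or a vertex outside `X` with
`k + 1` neighbours. Hence `X` is everything, and `W` is the required set `S`.
-/

def nbhdU (n : ℕ) (E : Finset (Fin n × Fin n)) (u : Fin n) : Finset (Fin n) :=
  {v | (u, v) ∈ E}

def nbhdV (n : ℕ) (E : Finset (Fin n × Fin n)) (v : Fin n) : Finset (Fin n) :=
  {u | (u, v) ∈ E}

def commonNbhd (n : ℕ) (E : Finset (Fin n × Fin n)) (W : Finset (Fin n)) : Finset (Fin n) :=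
  {u | W ⊆ nbhdU n E u}

section Neighbourhoods

variable {n : ℕ} {E : Finset (Fin n × Fin n)}

@[simp]
lemma mem_nbhdU {u v : Fin n} : v ∈ nbhdU n E u ↔ (u, v) ∈ E := by
  simp [nbhdU]

lemma mem_commonNbhd {W : Finset (Fin n)} {u : Fin n} :
    u ∈ commonNbhd n E W ↔ W ⊆ nbhdU n E u := by
  simp [commonNbhd]

lemma card_nbhdU (u : Fin n) : #(nbhdU n E u) = degU n E u := by
  rw [degU, ← card_map ⟨(u, ·), Prod.mk_right_injective u⟩]
  congr 1
  ext ⟨a, b⟩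
  simp only [nbhdU, mem_filter, mem_map, mem_univ, true_and, Function.Embedding.coeFn_mk]
  grind

lemma card_nbhdV (v : Fin n) : #(nbhdV n E v) = degV n E v := by
  rw [degV, ← card_map ⟨(·, v), Prod.mk_left_injective v⟩]
  congr 1
  ext ⟨a, b⟩
  simp only [nbhdV, mem_filter, mem_map, mem_univ, true_and, Function.Embedding.coeFn_mk]
  grind

lemma card_eq_sum_degU : #E = ∑ u, degU n E u :=
  card_eq_sum_card_fiberwise fun p _ => mem_univ p.1

lemma sum_degU_eq (W : Finset (Fin n)) :
    ∑ u, degU n E u = #(commonNbhd n E W) * #W + ∑ u ∈ (commonNbhd n E W)ᶜ, degU n E u +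
      ∑ v ∈ Wᶜ, #{u ∈ commonNbhd n E W | (u, v) ∈ E} := by
  set X := commonNbhd n E W
  have hX : ∑ u ∈ X, degU n E u = ∑ v, #{u ∈ X | (u, v) ∈ E} := by
    simp_rw [← card_nbhdU]
    exact sum_card_bipartiteAbove_eq_sum_card_bipartiteBelow (fun u v => (u, v) ∈ E)
  have hW : ∀ v ∈ W, {u ∈ X | (u, v) ∈ E} = X := fun v hv =>
    filter_true_of_mem fun u hu => mem_nbhdU.1 (mem_commonNbhd.1 hu hv)
  rw [← sum_add_sum_compl X, hX, ← sum_add_sum_compl W,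
    sum_congr rfl fun v hv => by rw [hW v hv], sum_const, smul_eq_mul]
  ring

end Neighbourhoods

lemma eq_of_sum_add_sum_le {ι κ : Type*} {s : Finset ι} {t : Finset κ} {f : ι → ℕ}
    {g : κ → ℕ} {c d : ℕ} (hf : ∀ i ∈ s, c ≤ f i) (hg : ∀ j ∈ t, d ≤ g j)
    (h : ∑ i ∈ s, f i + ∑ j ∈ t, g j ≤ #s * c + #t * d) :
    (∀ i ∈ s, f i = c) ∧ ∀ j ∈ t, g j = d := by
  have hfs := card_nsmul_le_sum s f c hf
  have hgs := card_nsmul_le_sum t g d hg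
  rw [smul_eq_mul] at hfs hgs
  constructor
  · have : ∑ _i ∈ s, c = ∑ i ∈ s, f i := by rw [sum_const, smul_eq_mul]; linarith
    exact fun i hi => ((sum_eq_sum_iff_of_le hf).1 this i hi).symm
  · have : ∑ _j ∈ t, d = ∑ j ∈ t, g j := by rw [sum_const, smul_eq_mul]; linarith
    exact fun j hj => ((sum_eq_sum_iff_of_le hg).1 this j hj).symm

section Saturation

variable {n : ℕ} {E : Finset (Fin n × Fin n)} {s t : ℕ} {u v : Fin n}

lemma ContainsK.exists_of_insert {a b : ℕ} (hfree : ¬ ContainsK n E a b)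
    (h : ContainsK n (insert (u, v) E) a b) :
    ∃ S T : Finset (Fin n), #S = a ∧ #T = b ∧ u ∈ S ∧ T ⊆ insert v (nbhdU n E u) ∧
      ∀ x ∈ S.erase u, ∀ y ∈ T, (x, y) ∈ E := by
  obtain ⟨S, T, hS, hT, hST⟩ := h
  have huS : u ∈ S := by
    by_contra huS
    refine hfree ⟨S, T, hS, hT, fun x hx y hy => (mem_insert.1 (hST x hx y hy)).resolve_left ?_⟩
    rintro ⟨rfl, -⟩
    exact huS hx
  refine ⟨S, T, hS, hT, huS, fun y hy => ?_, fun x hx y hy => ?_⟩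
  · rcases mem_insert.1 (hST u huS y hy) with h | h
    · exact mem_insert.2 (Or.inl (Prod.ext_iff.1 h).2)
    · exact mem_insert_of_mem (mem_nbhdU.2 h)
  · refine (mem_insert.1 (hST x (mem_of_mem_erase hx) y hy)).resolve_left ?_
    rintro ⟨rfl, -⟩
    exact notMem_erase _ _ hx

lemma SaturatedKst.le_degU_add_one (hst : s ≤ t) (hsat : SaturatedKst n E s t)
    (huv : (u, v) ∉ E) : s ≤ degU n E u + 1 := by
  have hT : ∀ {a b : ℕ}, ¬ ContainsK n E a b → ContainsK n (insert (u, v) E) a b →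
      b ≤ degU n E u + 1 := fun hfree h => by
    obtain ⟨-, T, -, rfl, -, hTsub, -⟩ := ContainsK.exists_of_insert hfree h
    calc #T ≤ #(insert v (nbhdU n E u)) := card_le_card hTsub
      _ ≤ degU n E u + 1 := (card_insert_le _ _).trans_eq (by rw [card_nbhdU])
  rcases hsat.2 u v huv with h | h
  · exact hst.trans (hT (fun h' => hsat.1 (Or.inl h')) h)
  · exact hT (fun h' => hsat.1 (Or.inr h')) h

lemma SaturatedKst.exists_complete_insert_nbhdU (hst : s < t) (hsat : SaturatedKst n E s t)
    (huv : (u, v) ∉ E) (hdeg : degU n E u + 1 ≤ s) :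
    ∃ Q : Finset (Fin n), #Q + 1 = t ∧
      ∀ q ∈ Q, ∀ y ∈ insert v (nbhdU n E u), (q, y) ∈ E := by
  have hins : #(insert v (nbhdU n E u)) ≤ degU n E u + 1 :=
    (card_insert_le _ _).trans_eq (by rw [card_nbhdU])
  rcases hsat.2 u v huv with h | h
  · obtain ⟨-, T, -, hT, -, hTsub, -⟩ :=
      ContainsK.exists_of_insert (fun h' => hsat.1 (Or.inl h')) h
    have := card_le_card hTsub
    omega
  · obtain ⟨S, T, hS, hT, huS, hTsub, hST⟩ :=
      ContainsK.exists_of_insert (fun h' => hsat.1 (Or.inr h')) h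
    have hTeq : T = insert v (nbhdU n E u) :=
      eq_of_subset_of_card_le hTsub (by omega)
    refine ⟨S.erase u, ?_, hTeq ▸ hST⟩
    rw [card_erase_of_mem huS]
    omega

end Saturation

section Extremal

variable {n k : ℕ} {E : Finset (Fin n × Fin n)} {W : Finset (Fin n)} {u v : Fin n}

lemma SaturatedKst.degU_eq_of_lt (hsat : SaturatedKst n E (k + 1) (k + 2)) (hn : k < n)
    (hu : degU n E u < k + 1) : degU n E u = k := by
  obtain ⟨v, -, hv⟩ := exists_mem_notMem_of_card_lt_card (s := nbhdU n E u) (t := univ)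
    (by rw [card_nbhdU, card_univ, Fintype.card_fin]; omega)
  have := hsat.le_degU_add_one (by omega) (mt mem_nbhdU.2 hv)
  omega

lemma SaturatedKst.le_degU_of_notMem_commonNbhd (hsat : SaturatedKst n E (k + 1) (k + 2))
    (hu : u ∉ commonNbhd n E W) : k ≤ degU n E u := by
  obtain ⟨w, -, hw⟩ := not_subset.1 (mt mem_commonNbhd.2 hu)
  have := hsat.le_degU_add_one (by omega) (mt mem_nbhdU.2 hw)
  omega

lemma SaturatedKst.le_card_filter_commonNbhd (hsat : SaturatedKst n E (k + 1) (k + 2))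
    (hu : degU n E u = k) (hv : v ∉ nbhdU n E u) :
    k + 1 ≤ #{x ∈ commonNbhd n E (nbhdU n E u) | (x, v) ∈ E} := by
  obtain ⟨Q, hQ, hQE⟩ :=
    hsat.exists_complete_insert_nbhdU (by omega) (mt mem_nbhdU.2 hv) (by omega)
  have hsub : Q ⊆ {x ∈ commonNbhd n E (nbhdU n E u) | (x, v) ∈ E} := fun q hq =>
    mem_filter.2 ⟨mem_commonNbhd.2 fun w hw => mem_nbhdU.2 (hQE q hq w (mem_insert_of_mem hw)),
      hQE q hq v (mem_insert_self _ _)⟩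
  have := card_le_card hsub
  omega

lemma SaturatedKst.commonNbhd_eq_univ (hsat : SaturatedKst n E (k + 1) (k + 2))
    (hW : #W = k) (hn : 2 * k < n) (hdeg : ∀ u ∉ commonNbhd n E W, degU n E u = k) :
    commonNbhd n E W = univ := by
  refine eq_univ_of_forall fun u => by_contra fun hu => ?_
  have hdu := hdeg u hu
  have hcard : #(nbhdU n E u) = k := (card_nbhdU u).trans hdu
  obtain ⟨v', hv'u, hv'W⟩ : ∃ v' ∈ nbhdU n E u, v' ∉ W := not_subset.1 fun hsub =>
    hu (mem_commonNbhd.2 (eq_of_subset_of_card_le hsub (by omega)).ge)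
  obtain ⟨v, -, hv⟩ := exists_mem_notMem_of_card_lt_card (s := W ∪ nbhdU n E u) (t := univ)
    (by rw [card_univ, Fintype.card_fin]; have := card_union_le W (nbhdU n E u); omega)
  rw [mem_union, not_or] at hv
  obtain ⟨Q, hQ, hQE⟩ :=
    hsat.exists_complete_insert_nbhdU (by omega) (mt mem_nbhdU.2 hv.2) (by omega)
  by_cases hQX : Q ⊆ commonNbhd n E W
  · refine hsat.1 (Or.inl ⟨Q, insert v (insert v' W), by omega, ?_, fun q hq y hy => ?_⟩)
    · rw [card_insert_of_notMem, card_insert_of_notMem hv'W, hW]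
      rw [mem_insert, not_or]
      exact ⟨fun h => hv.2 (h ▸ hv'u), hv.1⟩
    · rcases mem_insert.1 hy with rfl | hy
      · exact hQE q hq y (mem_insert_self _ _)
      rcases mem_insert.1 hy with rfl | hy
      · exact hQE q hq y (mem_insert_of_mem hv'u)
      · exact mem_nbhdU.1 (mem_commonNbhd.1 (hQX hq) hy)
  · obtain ⟨q, hqQ, hqX⟩ := not_subset.1 hQX
    have hsub : insert v (nbhdU n E u) ⊆ nbhdU n E q := fun y hy => mem_nbhdU.2 (hQE q hqQ y hy)
    have := card_le_card hsub
    rw [card_insert_of_notMem hv.2, hcard, card_nbhdU, hdeg q hqX] at this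
    omega

lemma SaturatedKst.exists_universal_of_degU_lt (hsat : SaturatedKst n E (k + 1) (k + 2))
    (hn : 2 * k < n) (hE : #E + (k + 1) * k = (2 * k + 1) * n) (hu : degU n E u < k + 1) :
    ∃ S : Finset (Fin n), #S = k ∧ (∀ v ∈ S, ∀ x, (x, v) ∈ E) ∧
      ∀ v ∉ S, degV n E v = k + 1 := by
  set W := nbhdU n E u
  set X := commonNbhd n E W
  have hdu : degU n E u = k := hsat.degU_eq_of_lt (by omega) hu
  have hW : #W = k := (card_nbhdU u).trans hdu
  have hXc : ∀ x ∈ Xᶜ, k ≤ degU n E x := fun x hx =>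
    hsat.le_degU_of_notMem_commonNbhd (mem_compl.1 hx)
  have hWc : ∀ v ∈ Wᶜ, k + 1 ≤ #{x ∈ X | (x, v) ∈ E} := fun v hv =>
    hsat.le_card_filter_commonNbhd hdu (mem_compl.1 hv)
  obtain ⟨hXc_eq, hWc_eq⟩ := eq_of_sum_add_sum_le hXc hWc (by
    have hsum := sum_degU_eq (E := E) W
    have hX := card_compl_add_card X
    have hW' := card_compl_add_card W
    rw [← card_eq_sum_degU, hW] at hsum
    rw [Fintype.card_fin] at hX hW'
    nlinarith)
  have hX : X = univ := hsat.commonNbhd_eq_univ hW hn fun x hx => hXc_eq x (mem_compl.2 hx)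
  refine ⟨W, hW, fun v hv x => ?_, fun v hv => ?_⟩
  · exact mem_nbhdU.1 (mem_commonNbhd.1 (eq_univ_iff_forall.1 hX x) hv)
  · rw [← card_nbhdV, ← hWc_eq v (mem_compl.2 hv), hX]
    rfl

end Extremal

section Transpose

variable {n : ℕ} {E : Finset (Fin n × Fin n)}

lemma mem_image_swap {u v : Fin n} : (u, v) ∈ E.image Prod.swap ↔ (v, u) ∈ E := by
  simp

lemma containsK_image_swap {a b : ℕ} :
    ContainsK n (E.image Prod.swap) a b ↔ ContainsK n E b a := by
  constructor <;> rintro ⟨S, T, hS, hT, h⟩ <;>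
    exact ⟨T, S, hT, hS, fun x hx y hy => by simpa using h y hy x hx⟩

lemma containsKst_image_swap {s t : ℕ} :
    ContainsKst n (E.image Prod.swap) s t ↔ ContainsKst n E s t := by
  rw [ContainsKst, ContainsKst, containsK_image_swap, containsK_image_swap, or_comm]

lemma SaturatedKst.image_swap {s t : ℕ} (h : SaturatedKst n E s t) :
    SaturatedKst n (E.image Prod.swap) s t := by
  refine ⟨containsKst_image_swap.not.2 h.1, fun u v huv => ?_⟩
  rw [← Prod.swap_prod_mk, ← image_insert, containsKst_image_swap]
  exact h.2 v u (mt mem_image_swap.2 huv)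

lemma degU_image_swap (u : Fin n) : degU n (E.image Prod.swap) u = degV n E u := by
  rw [degU, degV, filter_image, card_image_of_injective _ Prod.swap_injective]
  rfl

lemma degV_image_swap (v : Fin n) : degV n (E.image Prod.swap) v = degU n E v := by
  rw [degU, degV, filter_image, card_image_of_injective _ Prod.swap_injective]
  rfl

end Transpose

/-- an extremal `K_{t-1,t}`-saturated `n` by `n` bipartite graph
(with exactly `(2t-3)n - (t-1)(t-2)` edges) of minimum degree less than `t-1`
has, on one of its sides, a set `S` of `t-2` vertices that is complete to the
other side, with all vertices outside `S` on the same side of degree exactly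
`t-1` (i.e. it lies in the family `F^n_{t-1,t}`). -/
theorem stmt9 (t : ℕ) (ht : 2 ≤ t) :
    ∃ N : ℕ, ∀ n : ℕ, N ≤ n →
      ∀ E : Finset (Fin n × Fin n),
        SaturatedKst n E (t - 1) t →
        E.card + (t - 1) * (t - 2) = (2 * t - 3) * n →
        ((∃ u : Fin n, degU n E u < t - 1) ∨ (∃ v : Fin n, degV n E v < t - 1)) →
        (∃ S : Finset (Fin n), S.card = t - 2 ∧
            (∀ u ∈ S, ∀ v : Fin n, (u, v) ∈ E) ∧
            (∀ u : Fin n, u ∉ S → degU n E u = t - 1)) ∨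
        (∃ S' : Finset (Fin n), S'.card = t - 2 ∧
            (∀ v ∈ S', ∀ u : Fin n, (u, v) ∈ E) ∧
            (∀ v : Fin n, v ∉ S' → degV n E v = t - 1)) := by
  obtain ⟨k, rfl⟩ : ∃ k, t = k + 2 := ⟨t - 2, by omega⟩
  refine ⟨2 * k + 1, fun n hn E hsat hE hmin => ?_⟩
  simp only [show k + 2 - 1 = k + 1 by omega, show k + 2 - 2 = k by omega,
    show 2 * (k + 2) - 3 = 2 * k + 1 by omega] at hsat hE hmin ⊢
  rcases hmin with ⟨u, hu⟩ | ⟨v, hv⟩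
  · exact Or.inr (hsat.exists_universal_of_degU_lt (by omega) hE hu)
  · obtain ⟨S, hS, hSE, hdeg⟩ :=
      hsat.image_swap.exists_universal_of_degU_lt (u := v) (by omega)
      (by rwa [card_image_of_injective _ Prod.swap_injective]) (by rwa [degU_image_swap])
    exact Or.inl ⟨S, hS, fun u hu v => mem_image_swap.1 (hSE u hu v),
      fun u hu => degV_image_swap (E := E) u ▸ hdeg u hu⟩
end

section
/- Let G be a K_{s,t}-saturated n by n bipartite graph (1 ≤ s < t, n sufficiently large). Suppose G contains a 'nice core': sets A ⊆ U, A' ⊆ U' with |A| = |A'| = t-1, vertices a₀ ∈ A, a₀' ∈ A' with N(a₀) = A' and N(a₀') = A, and the bipartite graph induced on (A, A') contains a copy of K_{s,t-1}. Then every vertex v ∈ U \ A with fewer than s-1 neighbors in A' has at least t-1 neighbors in A' ∪ B', where B' is the set of vertices in U' \ A' with at least s-1 neighbors in A. -/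
open Finset

lemma copy_uses (n : ℕ) (E : Finset (Fin n × Fin n)) (p : Fin n × Fin n)
    (S₀ T₀ : Finset (Fin n))
    (hST : ∀ u ∈ S₀, ∀ w ∈ T₀, (u, w) ∈ insert p E)
    (h : p.1 ∉ S₀ ∨ p.2 ∉ T₀) :
    ∀ u ∈ S₀, ∀ w ∈ T₀, (u, w) ∈ E := by
  intro u hu w hw
  rcases Finset.mem_insert.1 (hST u hu w hw) with heq | hE
  · cases h with
    | inl h => exact absurd hu (by rw [← heq] at h; exact h)
    | inr h => exact absurd hw (by rw [← heq] at h; exact h)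
  · exact hE

/-- Observation 4.1: in a `K_{s,t}`-saturated graph with a nice
core `(A, A', a₀, a₀')`, every vertex `v ∈ U \ A` with fewer than `s-1`
neighbors in `A'` has at least `t-1` neighbors in `A' ∪ B'`, where `B'` is the
set of vertices of `U' \ A'` with at least `s-1` neighbors in `A`. -/
theorem stmt10 (s t n : ℕ) (hs : 1 ≤ s) (hst : s < t)
    (E : Finset (Fin n × Fin n)) (hsat : SaturatedKst n E s t)
    (A A' : Finset (Fin n)) (a₀ a₀' : Fin n)
    (hA : A.card = t - 1) (hA' : A'.card = t - 1)
    (ha₀ : a₀ ∈ A) (ha₀' : a₀' ∈ A')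
    (hNa₀ : univ.filter (fun v => (a₀, v) ∈ E) = A')
    (hNa₀' : univ.filter (fun u => (u, a₀') ∈ E) = A)
    (hK : ∃ S ⊆ A, S.card = s ∧ ∀ u ∈ S, ∀ v ∈ A', (u, v) ∈ E)
    (B' : Finset (Fin n))
    (hB' : B' = (univ \ A').filter
        (fun v => s - 1 ≤ (A.filter (fun u => (u, v) ∈ E)).card))
    (v : Fin n) (hv : v ∉ A)
    (hfew : (A'.filter (fun w => (v, w) ∈ E)).card < s - 1) :
    t - 1 ≤ ((A' ∪ B').filter (fun w => (v, w) ∈ E)).card := by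

  have hvE : (v, a₀') ∉ E := fun h => hv (by rw [← hNa₀']; simp [h])
  have hfree := hsat.1
  rcases hsat.2 v a₀' hvE with h | h <;>
    obtain ⟨S₀, T₀, hS₀, hT₀, hST⟩ := h
  · -- Case 1: |S₀| = s, |T₀| = t
    have hvS : v ∈ S₀ := by
      by_contra hvS
      exact hfree (Or.inl ⟨S₀, T₀, hS₀, hT₀, copy_uses n E (v, a₀') S₀ T₀ hST (Or.inl hvS)⟩)
    have haT : a₀' ∈ T₀ := by
      by_contra haT
      exact hfree (Or.inl ⟨S₀, T₀, hS₀, hT₀, copy_uses n E (v, a₀') S₀ T₀ hST (Or.inr haT)⟩)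
    have hEvw : ∀ w ∈ T₀.erase a₀', (v, w) ∈ E := by
      intro w hw
      rcases Finset.mem_insert.1 (hST v hvS w (Finset.mem_of_mem_erase hw)) with heq | hE
      · exact absurd (congrArg Prod.snd heq) (Finset.ne_of_mem_erase hw)
      · exact hE
    have hEuw : ∀ u ∈ S₀.erase v, ∀ w ∈ T₀, (u, w) ∈ E := by
      intro u hu w hw
      rcases Finset.mem_insert.1 (hST u (Finset.mem_of_mem_erase hu) w hw) with heq | hE
      · exact absurd (congrArg Prod.fst heq) (Finset.ne_of_mem_erase hu)
      · exact hE
    have hSA : S₀.erase v ⊆ A := by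
      intro u hu
      have : (u, a₀') ∈ E := hEuw u hu a₀' haT
      rw [← hNa₀']; simp [this]
    have hsub : T₀.erase a₀' ⊆ (A' ∪ B').filter (fun w => (v, w) ∈ E) := by
      intro w hw
      rw [Finset.mem_filter]
      refine ⟨?_, hEvw w hw⟩
      by_cases hwA' : w ∈ A'
      · exact Finset.mem_union_left _ hwA'
      · refine Finset.mem_union_right _ ?_
        rw [hB', Finset.mem_filter]
        refine ⟨by simp [hwA'], ?_⟩
        have hss : S₀.erase v ⊆ A.filter (fun u => (u, w) ∈ E) := fun u hu =>
          Finset.mem_filter.2 ⟨hSA hu, hEuw u hu w (Finset.mem_of_mem_erase hw)⟩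
        calc s - 1 = (S₀.erase v).card := by rw [Finset.card_erase_of_mem hvS, hS₀]
          _ ≤ _ := Finset.card_le_card hss
    calc t - 1 = (T₀.erase a₀').card := by rw [Finset.card_erase_of_mem haT, hT₀]
      _ ≤ _ := Finset.card_le_card hsub
  · -- Case 2: |S₀| = t, |T₀| = s
    have hvS : v ∈ S₀ := by
      by_contra hvS
      exact hfree (Or.inr ⟨S₀, T₀, hS₀, hT₀, copy_uses n E (v, a₀') S₀ T₀ hST (Or.inl hvS)⟩)
    have haT : a₀' ∈ T₀ := by
      by_contra haT
      exact hfree (Or.inr ⟨S₀, T₀, hS₀, hT₀, copy_uses n E (v, a₀') S₀ T₀ hST (Or.inr haT)⟩)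
    have hEvw : ∀ w ∈ T₀.erase a₀', (v, w) ∈ E := by
      intro w hw
      rcases Finset.mem_insert.1 (hST v hvS w (Finset.mem_of_mem_erase hw)) with heq | hE
      · exact absurd (congrArg Prod.snd heq) (Finset.ne_of_mem_erase hw)
      · exact hE
    have hEuw : ∀ u ∈ S₀.erase v, ∀ w ∈ T₀, (u, w) ∈ E := by
      intro u hu w hw
      rcases Finset.mem_insert.1 (hST u (Finset.mem_of_mem_erase hu) w hw) with heq | hE
      · exact absurd (congrArg Prod.fst heq) (Finset.ne_of_mem_erase hu)
      · exact hE
    have hSA : S₀.erase v ⊆ A := by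
      intro u hu
      have : (u, a₀') ∈ E := hEuw u hu a₀' haT
      rw [← hNa₀']; simp [this]
    have hSeq : S₀.erase v = A :=
      Finset.eq_of_subset_of_card_le hSA
        (by rw [Finset.card_erase_of_mem hvS, hS₀, hA])
    have ha₀S : a₀ ∈ S₀.erase v := by rw [hSeq]; exact ha₀
    have hsub : T₀.erase a₀' ⊆ A'.filter (fun w => (v, w) ∈ E) := by
      intro w hw
      refine Finset.mem_filter.2 ⟨?_, hEvw w hw⟩
      have : (a₀, w) ∈ E := hEuw a₀ ha₀S w (Finset.mem_of_mem_erase hw)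
      rw [← hNa₀]; simp [this]
    have hle : s - 1 ≤ (A'.filter (fun w => (v, w) ∈ E)).card := by
      calc s - 1 = (T₀.erase a₀').card := by rw [Finset.card_erase_of_mem haT, hT₀]
        _ ≤ _ := Finset.card_le_card hsub
    exact absurd hle (Nat.not_le.2 hfew)
end

section
/- In the setting of a K_{s,t}-saturated bipartite graph G with a nice core and the partition of U \ A into B and C (and similarly for U'), with C₂ ⊆ C the set of vertices with at most s-2 neighbors outside B₂' and C₂' defined symmetrically: every vertex of C₂ is adjacent to every vertex of C₂', i.e., (C₂, C₂') induces a complete bipartite graph. -/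
open Finset

/-- Observation 4.2: with the nice core and the partition
`B, C, B₁, B₂, C₁, C₂` of `U \ A` (and primed analogues on the `U'` side),
the edges between `C₂` and `C₂'` form a complete bipartite graph. -/
theorem stmt11 (s t n : ℕ) (hs : 1 ≤ s) (hst : s < t)
    (E : Finset (Fin n × Fin n)) (hsat : SaturatedKst n E s t)
    (hminU : ∀ u : Fin n, t - 1 ≤ degU n E u)
    (hminV : ∀ v : Fin n, t - 1 ≤ degV n E v)
    (A A' : Finset (Fin n)) (a₀ a₀' : Fin n)
    (hA : A.card = t - 1) (hA' : A'.card = t - 1)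
    (ha₀ : a₀ ∈ A) (ha₀' : a₀' ∈ A')
    (hNa₀ : univ.filter (fun v => (a₀, v) ∈ E) = A')
    (hNa₀' : univ.filter (fun u => (u, a₀') ∈ E) = A)
    (hK : ∃ S ⊆ A, S.card = s ∧ ∀ u ∈ S, ∀ v ∈ A', (u, v) ∈ E)
    (B B' B₁ B₁' B₂ B₂' C C' C₁ C₁' C₂ C₂' : Finset (Fin n))
    (hB : B = (univ \ A).filter
        (fun u => s - 1 ≤ (A'.filter (fun v => (u, v) ∈ E)).card))
    (hB' : B' = (univ \ A').filter
        (fun v => s - 1 ≤ (A.filter (fun u => (u, v) ∈ E)).card))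
    (hB₁ : B₁ = B.filter
        (fun u => t - 1 ≤ ((A' ∪ B').filter (fun v => (u, v) ∈ E)).card))
    (hB₁' : B₁' = B'.filter
        (fun v => t - 1 ≤ ((A ∪ B).filter (fun u => (u, v) ∈ E)).card))
    (hB₂ : B₂ = B \ B₁) (hB₂' : B₂' = B' \ B₁')
    (hC : C = (univ \ A) \ B) (hC' : C' = (univ \ A') \ B')
    (hC₁ : C₁ = C.filter
        (fun u => s - 1 ≤ ((univ \ B₂').filter (fun v => (u, v) ∈ E)).card))
    (hC₁' : C₁' = C'.filter
        (fun v => s - 1 ≤ ((univ \ B₂).filter (fun u => (u, v) ∈ E)).card))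
    (hC₂ : C₂ = C \ C₁) (hC₂' : C₂' = C' \ C₁') :
    ∀ u ∈ C₂, ∀ v ∈ C₂', (u, v) ∈ E := by

  obtain ⟨hfree, hsatur⟩ := hsat
  -- basic containments
  have hB2subB : B₂ ⊆ B := by rw [hB₂]; exact sdiff_subset
  have hB2'subB' : B₂' ⊆ B' := by rw [hB₂']; exact sdiff_subset
  have hBnotA : ∀ x ∈ B, x ∉ A := by
    intro x hx; rw [hB, mem_filter, mem_sdiff] at hx; exact hx.1.2
  have hB'notA' : ∀ y ∈ B', y ∉ A' := by
    intro y hy; rw [hB', mem_filter, mem_sdiff] at hy; exact hy.1.2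
  intro u hu v hv
  by_contra huv
  rw [hC₂, mem_sdiff] at hu
  rw [hC₂', mem_sdiff] at hv
  have hu2 : ((univ \ B₂').filter (fun y => (u, y) ∈ E)).card < s - 1 := by
    have h := hu.2
    rw [hC₁, mem_filter, not_and, not_le] at h
    exact h hu.1
  have hv2 : ((univ \ B₂).filter (fun x => (x, v) ∈ E)).card < s - 1 := by
    have h := hv.2
    rw [hC₁', mem_filter, not_and, not_le] at h
    exact h hv.1
  rcases hsatur u v huv with ⟨S, T, hScard, hTcard, hST⟩ | ⟨S, T, hScard, hTcard, hST⟩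
  · -- |S| = s, |T| = t
    have huS : u ∈ S := by
      by_contra huS
      refine hfree (Or.inl ⟨S, T, hScard, hTcard, fun x hx y hy => ?_⟩)
      have h := hST x hx y hy
      simp only [mem_insert, Prod.mk.injEq] at h
      rcases h with ⟨h1, h2⟩ | h
      · subst h1; exact absurd hx huS
      · exact h
    have hvT : v ∈ T := by
      by_contra hvT
      refine hfree (Or.inl ⟨S, T, hScard, hTcard, fun x hx y hy => ?_⟩)
      have h := hST x hx y hy
      simp only [mem_insert, Prod.mk.injEq] at h
      rcases h with ⟨h1, h2⟩ | h
      · subst h2; exact absurd hy hvT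
      · exact h
    have hE1 : ∀ x ∈ S, x ≠ u → ∀ y ∈ T, (x, y) ∈ E := by
      intro x hx hxu y hy
      have h := hST x hx y hy
      simp only [mem_insert, Prod.mk.injEq] at h
      rcases h with ⟨h1, h2⟩ | h
      · exact absurd h1 hxu
      · exact h
    have hE2 : ∀ y ∈ T, y ≠ v → (u, y) ∈ E := by
      intro y hy hyv
      have h := hST u huS y hy
      simp only [mem_insert, Prod.mk.injEq] at h
      rcases h with ⟨h1, h2⟩ | h
      · exact absurd h2 hyv
      · exact h
    -- find w ∈ (S.erase u) ∩ B₂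
    have hSerase : (S.erase u).card = s - 1 := by rw [card_erase_of_mem huS, hScard]
    have hsub1 : (S.erase u) \ B₂ ⊆ (univ \ B₂).filter (fun x => (x, v) ∈ E) := by
      intro x hx
      rw [mem_sdiff] at hx
      rw [mem_filter, mem_sdiff]
      exact ⟨⟨mem_univ x, hx.2⟩, hE1 x (mem_of_mem_erase hx.1) (ne_of_mem_erase hx.1) v hvT⟩
    have h1 : ((S.erase u) \ B₂).card < s - 1 :=
      lt_of_le_of_lt (card_le_card hsub1) hv2
    have h1' : ((S.erase u) ∩ B₂).card + ((S.erase u) \ B₂).card = s - 1 := by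
      rw [card_inter_add_card_sdiff, hSerase]
    have hpos : 0 < ((S.erase u) ∩ B₂).card := by omega
    obtain ⟨w, hw⟩ := card_pos.1 hpos
    rw [mem_inter] at hw
    have hwS := mem_of_mem_erase hw.1
    have hwu := ne_of_mem_erase hw.1
    -- count T-side B₂' part
    have hTerase : (T.erase v).card = t - 1 := by rw [card_erase_of_mem hvT, hTcard]
    have hsub2 : (T.erase v) \ B₂' ⊆ (univ \ B₂').filter (fun y => (u, y) ∈ E) := by
      intro y hy
      rw [mem_sdiff] at hy
      rw [mem_filter, mem_sdiff]
      exact ⟨⟨mem_univ y, hy.2⟩, hE2 y (mem_of_mem_erase hy.1) (ne_of_mem_erase hy.1)⟩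
    have h2 : ((T.erase v) \ B₂').card < s - 1 :=
      lt_of_le_of_lt (card_le_card hsub2) hu2
    have h2' : ((T.erase v) ∩ B₂').card + ((T.erase v) \ B₂').card = t - 1 := by
      rw [card_inter_add_card_sdiff, hTerase]
    -- facts about w ∈ B₂
    have hwB2 := hw.2
    rw [hB₂, mem_sdiff] at hwB2
    have hwdeg : s - 1 ≤ (A'.filter (fun y => (w, y) ∈ E)).card := by
      have h := hwB2.1
      rw [hB, mem_filter] at h
      exact h.2
    have hwcap : ((A' ∪ B').filter (fun y => (w, y) ∈ E)).card < t - 1 := by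
      have h := hwB2.2
      rw [hB₁, mem_filter, not_and, not_le] at h
      exact h hwB2.1
    -- w is adjacent to all of (T.erase v) ∩ B₂' and to its ≥ s-1 A'-neighbors
    have hsub3 : (A'.filter (fun y => (w, y) ∈ E)) ∪ ((T.erase v) ∩ B₂')
        ⊆ (A' ∪ B').filter (fun y => (w, y) ∈ E) := by
      intro y hy
      rw [mem_union] at hy
      rw [mem_filter, mem_union]
      rcases hy with hy | hy
      · rw [mem_filter] at hy; exact ⟨Or.inl hy.1, hy.2⟩
      · rw [mem_inter] at hy
        exact ⟨Or.inr (hB2'subB' hy.2), hE1 w hwS hwu y (mem_of_mem_erase hy.1)⟩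
    have hdisj : Disjoint (A'.filter (fun y => (w, y) ∈ E)) ((T.erase v) ∩ B₂') := by
      rw [disjoint_left]
      intro y hy1 hy2
      rw [mem_filter] at hy1
      rw [mem_inter] at hy2
      exact (hB'notA' _ (hB2'subB' hy2.2)) hy1.1
    have hbig := card_le_card hsub3
    rw [card_union_of_disjoint hdisj] at hbig
    omega
  · -- |S| = t, |T| = s
    have huS : u ∈ S := by
      by_contra huS
      refine hfree (Or.inr ⟨S, T, hScard, hTcard, fun x hx y hy => ?_⟩)
      have h := hST x hx y hy
      simp only [mem_insert, Prod.mk.injEq] at h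
      rcases h with ⟨h1, h2⟩ | h
      · subst h1; exact absurd hx huS
      · exact h
    have hvT : v ∈ T := by
      by_contra hvT
      refine hfree (Or.inr ⟨S, T, hScard, hTcard, fun x hx y hy => ?_⟩)
      have h := hST x hx y hy
      simp only [mem_insert, Prod.mk.injEq] at h
      rcases h with ⟨h1, h2⟩ | h
      · subst h2; exact absurd hy hvT
      · exact h
    have hE1 : ∀ x ∈ S, x ≠ u → ∀ y ∈ T, (x, y) ∈ E := by
      intro x hx hxu y hy
      have h := hST x hx y hy
      simp only [mem_insert, Prod.mk.injEq] at h
      rcases h with ⟨h1, h2⟩ | h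
      · exact absurd h1 hxu
      · exact h
    have hE2 : ∀ y ∈ T, y ≠ v → (u, y) ∈ E := by
      intro y hy hyv
      have h := hST u huS y hy
      simp only [mem_insert, Prod.mk.injEq] at h
      rcases h with ⟨h1, h2⟩ | h
      · exact absurd h2 hyv
      · exact h
    -- find y ∈ (T.erase v) ∩ B₂'
    have hTerase : (T.erase v).card = s - 1 := by rw [card_erase_of_mem hvT, hTcard]
    have hsub1 : (T.erase v) \ B₂' ⊆ (univ \ B₂').filter (fun y => (u, y) ∈ E) := by
      intro y hy
      rw [mem_sdiff] at hy
      rw [mem_filter, mem_sdiff]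
      exact ⟨⟨mem_univ y, hy.2⟩, hE2 y (mem_of_mem_erase hy.1) (ne_of_mem_erase hy.1)⟩
    have h1 : ((T.erase v) \ B₂').card < s - 1 :=
      lt_of_le_of_lt (card_le_card hsub1) hu2
    have h1' : ((T.erase v) ∩ B₂').card + ((T.erase v) \ B₂').card = s - 1 := by
      rw [card_inter_add_card_sdiff, hTerase]
    have hpos : 0 < ((T.erase v) ∩ B₂').card := by omega
    obtain ⟨y, hy⟩ := card_pos.1 hpos
    rw [mem_inter] at hy
    have hyT := mem_of_mem_erase hy.1
    have hyv := ne_of_mem_erase hy.1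
    -- count S-side B₂ part
    have hSerase : (S.erase u).card = t - 1 := by rw [card_erase_of_mem huS, hScard]
    have hsub2 : (S.erase u) \ B₂ ⊆ (univ \ B₂).filter (fun x => (x, v) ∈ E) := by
      intro x hx
      rw [mem_sdiff] at hx
      rw [mem_filter, mem_sdiff]
      exact ⟨⟨mem_univ x, hx.2⟩, hE1 x (mem_of_mem_erase hx.1) (ne_of_mem_erase hx.1) v hvT⟩
    have h2 : ((S.erase u) \ B₂).card < s - 1 :=
      lt_of_le_of_lt (card_le_card hsub2) hv2
    have h2' : ((S.erase u) ∩ B₂).card + ((S.erase u) \ B₂).card = t - 1 := by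
      rw [card_inter_add_card_sdiff, hSerase]
    -- facts about y ∈ B₂'
    have hyB2 := hy.2
    rw [hB₂', mem_sdiff] at hyB2
    have hydeg : s - 1 ≤ (A.filter (fun x => (x, y) ∈ E)).card := by
      have h := hyB2.1
      rw [hB', mem_filter] at h
      exact h.2
    have hycap : ((A ∪ B).filter (fun x => (x, y) ∈ E)).card < t - 1 := by
      have h := hyB2.2
      rw [hB₁', mem_filter, not_and, not_le] at h
      exact h hyB2.1
    have hsub3 : (A.filter (fun x => (x, y) ∈ E)) ∪ ((S.erase u) ∩ B₂)
        ⊆ (A ∪ B).filter (fun x => (x, y) ∈ E) := by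
      intro x hx
      rw [mem_union] at hx
      rw [mem_filter, mem_union]
      rcases hx with hx | hx
      · rw [mem_filter] at hx; exact ⟨Or.inl hx.1, hx.2⟩
      · rw [mem_inter] at hx
        exact ⟨Or.inr (hB2subB hx.2),
          hE1 x (mem_of_mem_erase hx.1) (ne_of_mem_erase hx.1) y hyT⟩
    have hdisj : Disjoint (A.filter (fun x => (x, y) ∈ E)) ((S.erase u) ∩ B₂) := by
      rw [disjoint_left]
      intro x hx1 hx2
      rw [mem_filter] at hx1
      rw [mem_inter] at hx2
      exact (hBnotA _ (hB2subB hx2.2)) hx1.1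
    have hbig := card_le_card hsub3
    rw [card_union_of_disjoint hdisj] at hbig
    omega
end

section
/- Let G be a K_{s,t}-saturated n by n bipartite graph with minimum degree at least t-1 containing a core with e edges (a core is a set A ∪ A' with A ⊆ U, A' ⊆ U', |A| = |A'| = t-1, containing vertices a₀ ∈ A, a₀' ∈ A' whose neighborhoods are contained in A' and A respectively). Then e(G) ≥ (s+t-2)(n-t+1) - ⌊(s-1)²/4⌋ + e. -/
/-!
The bipartite graph is a relation `r : α → β → Prop`; its transpose `swap r` lets every
statement about one side serve for the other.

Split `e(G) = e(A, A') + ∑_{u ∉ A} deg u + e(A, U' \ A')`. Let `D ⊆ U \ A` (`deficient`) be the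
vertices with fewer than `s - 1` neighbours in `A'`, and `D' ⊆ U' \ A'` their counterparts.
Saturating the non-edge `u a₀'` for `u ∈ D` yields a `K_{s,t}` in which `u` has `t - 1`
neighbours outside `D'`. So every `u ∈ D ∪ X` (`X` = `surplus`, defined to make this true) has
degree at least `t - 1 + |N(u) ∩ D'|`, and the degrees in `U \ A` pay for `(t - 1)(n - t + 1)`
edges plus all edges between `D ∪ X` and `D'`. Counted from `U'`, these edges together with those
to `A` give every vertex of `U' \ A'` at least `s - 1` edges, except the vertices of
`C₂' = poor (swap r)`. A second saturation argument shows that `C₂ = poor r` and `C₂'` are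
completely joined, so if `|C₂'| ≤ |C₂|` (swap the sides otherwise) the deficit
`|C₂'| (s - 1 - |C₂|)` is at most `⌊(s - 1)² / 4⌋`.
-/

open Finset

open Function

namespace BipartiteKst

theorem mul_le_mul_add_sq_div_four {y' y : ℕ} (h : y' ≤ y) (k : ℕ) :
    y' * k ≤ y' * y + k ^ 2 / 4 := by
  rcases le_total k y with hk | hk
  · exact le_add_right (Nat.mul_le_mul_left y' hk)
  · obtain ⟨d, rfl⟩ := Nat.exists_eq_add_of_le hk
    have : y * d ≤ (y + d) ^ 2 / 4 :=
      (Nat.le_div_iff_mul_le (by norm_num)).2 (by nlinarith [sq_nonneg ((y : ℤ) - d)])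
    nlinarith [Nat.mul_le_mul_right d h]

variable {α β : Type*}

section Copies

variable (r : α → β → Prop)

def HasCopyThrough (a b : ℕ) (u : α) (v : β) : Prop :=
  ∃ S : Finset α, ∃ T : Finset β, #S = a ∧ #T = b ∧ u ∈ S ∧ v ∈ T ∧
    ∀ x ∈ S, ∀ y ∈ T, x ≠ u ∨ y ≠ v → r x y

def NonEdgesComplete (s t : ℕ) : Prop :=
  ∀ u v, ¬ r u v → HasCopyThrough r s t u v ∨ HasCopyThrough r t s u v

structure IsCore (t : ℕ) (A : Finset α) (A' : Finset β) (a₀ : α) (a₀' : β) : Prop where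
  card_left : #A = t - 1
  card_right : #A' = t - 1
  mem_left : a₀ ∈ A
  mem_right : a₀' ∈ A'
  nbr_left : ∀ v, r a₀ v → v ∈ A'
  nbr_right : ∀ u, r u a₀' → u ∈ A

variable {r}

theorem hasCopyThrough_swap {a b : ℕ} {u : α} {v : β} :
    HasCopyThrough (swap r) a b v u ↔ HasCopyThrough r b a u v := by
  constructor <;> rintro ⟨S, T, hS, hT, hu, hv, h⟩ <;>
    exact ⟨T, S, hT, hS, hv, hu, fun x hx y hy hxy => h y hy x hx hxy.symm⟩

theorem NonEdgesComplete.symm {s t : ℕ} (h : NonEdgesComplete r s t) :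
    NonEdgesComplete (swap r) s t :=
  fun v u huv => (h u v huv).symm.imp hasCopyThrough_swap.2 hasCopyThrough_swap.2

theorem IsCore.symm {t : ℕ} {A : Finset α} {A' : Finset β} {a₀ : α} {a₀' : β}
    (h : IsCore r t A A' a₀ a₀') : IsCore (swap r) t A' A a₀' a₀ :=
  ⟨h.card_right, h.card_left, h.mem_right, h.mem_left, h.nbr_right, h.nbr_left⟩

end Copies

section EdgeCount

variable (r : α → β → Prop) [∀ a b, Decidable (r a b)]

def edgeCount (P : Finset α) (Q : Finset β) : ℕ := #{p ∈ P ×ˢ Q | r p.1 p.2}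

theorem edgeCount_eq_sum (P : Finset α) (Q : Finset β) :
    edgeCount r P Q = ∑ u ∈ P, #{v ∈ Q | r u v} := by
  simp only [edgeCount, card_filter, sum_product]

theorem sum_card_filter_comm (P : Finset α) (Q : Finset β) :
    ∑ u ∈ P, #{v ∈ Q | r u v} = ∑ v ∈ Q, #{u ∈ P | r u v} :=
  sum_card_bipartiteAbove_eq_sum_card_bipartiteBelow r

theorem edgeCount_swap (P : Finset α) (Q : Finset β) :
    edgeCount (swap r) Q P = edgeCount r P Q := by
  rw [edgeCount_eq_sum, edgeCount_eq_sum, sum_card_filter_comm]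

end EdgeCount

theorem card_filter_add_card_filter_compl [Fintype β] [DecidableEq β] (Q : Finset β)
    (p : β → Prop) [DecidablePred p] : #{v ∈ Q | p v} + #{v ∈ Qᶜ | p v} = #{v | p v} := by
  rw [← card_union_of_disjoint (disjoint_filter_filter disjoint_compl_right), ← filter_union,
    union_compl]

section Partition

variable [Fintype α] [Fintype β] [DecidableEq α] [DecidableEq β]
  (r : α → β → Prop) [∀ a b, Decidable (r a b)]

theorem edgeCount_univ (A : Finset α) (A' : Finset β) :
    edgeCount r univ univ =
      edgeCount r A A' + ∑ u ∈ Aᶜ, #{v | r u v} + ∑ v ∈ A'ᶜ, #{u ∈ A | r u v} := by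
  have hA : ∑ u ∈ A, #{v | r u v} =
      ∑ u ∈ A, #{v ∈ A' | r u v} + ∑ v ∈ A'ᶜ, #{u ∈ A | r u v} := by
    rw [← sum_card_filter_comm r A A'ᶜ, ← sum_add_distrib]
    exact sum_congr rfl fun u _ => (card_filter_add_card_filter_compl A' (r u)).symm
  rw [edgeCount_eq_sum, edgeCount_eq_sum, ← sum_add_sum_compl A, hA]
  ring

def deficient (s : ℕ) (A : Finset α) (A' : Finset β) : Finset α :=
  {u ∈ Aᶜ | #{v ∈ A' | r u v} < s - 1}

def surplus (s t : ℕ) (A : Finset α) (A' : Finset β) : Finset α :=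
  {u ∈ Aᶜ \ deficient r s A A' |
    #{v ∈ deficient (swap r) s A' A | r u v} + (t - s) ≤ #{v ∈ A'ᶜ | r u v}}

def poor (s t : ℕ) (A : Finset α) (A' : Finset β) : Finset α :=
  {u ∈ deficient r s A A' |
    #{v ∈ A' ∪ deficient (swap r) s A' A ∪ surplus (swap r) s t A' A | r u v} < s - 1}

variable {r} {s t : ℕ} {A : Finset α} {A' : Finset β} {a₀ : α} {a₀' : β}

theorem deficient_union_surplus_subset_compl :
    deficient r s A A' ∪ surplus r s t A A' ⊆ Aᶜ :=
  union_subset (filter_subset _ _) ((filter_subset _ _).trans sdiff_subset)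

theorem IsCore.le_card_filter_compl_deficient (hcore : IsCore r t A A' a₀ a₀')
    (hsat : NonEdgesComplete r s t) {u : α} (hu : u ∈ deficient r s A A') :
    t - 1 ≤ #{v ∈ (deficient (swap r) s A' A)ᶜ | r u v} := by
  obtain ⟨huA, hu⟩ : u ∉ A ∧ #{v ∈ A' | r u v} < s - 1 := by simpa [deficient] using hu
  rcases hsat u a₀' (fun h => huA (hcore.nbr_right u h)) with
    ⟨S, T, hS, hT, huS, haT, hST⟩ | ⟨S, T, hS, hT, huS, haT, hST⟩
  · -- every `w ∈ T \ {a₀'}` is joined to `S \ {u} ⊆ A`, hence is not deficient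
    calc t - 1 = #(T.erase a₀') := by rw [card_erase_of_mem haT, hT]
      _ ≤ _ := card_le_card fun w hw => ?_
    obtain ⟨hwa, hwT⟩ := mem_erase.1 hw
    refine mem_filter.2 ⟨mem_compl.2 fun hw => (mem_filter.1 hw).2.not_ge ?_,
      hST u huS w hwT (.inr hwa)⟩
    calc s - 1 = #(S.erase u) := by rw [card_erase_of_mem huS, hS]
      _ ≤ #{x ∈ A | r x w} := card_le_card fun x hx => by
        obtain ⟨hxu, hxS⟩ := mem_erase.1 hx
        exact mem_filter.2 ⟨hcore.nbr_right x (hST x hxS a₀' haT (.inl hxu)),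
          hST x hxS w hwT (.inl hxu)⟩
  · -- `S \ {u}` is then all of `A`, so `a₀ ∈ S` forces `T \ {a₀'} ⊆ A'`
    have hSA : S.erase u = A :=
      eq_of_subset_of_card_le (fun x hx => hcore.nbr_right x
          (hST x (mem_of_mem_erase hx) a₀' haT (.inl (ne_of_mem_erase hx))))
        (by rw [card_erase_of_mem huS, hS, hcore.card_left])
    have ha₀ : a₀ ∈ S.erase u := hSA ▸ hcore.mem_left
    refine absurd (?_ : s - 1 ≤ #{v ∈ A' | r u v}) (not_le.2 hu)
    calc s - 1 = #(T.erase a₀') := by rw [card_erase_of_mem haT, hT]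
      _ ≤ _ := card_le_card fun y hy => by
        obtain ⟨hya, hyT⟩ := mem_erase.1 hy
        exact mem_filter.2 ⟨hcore.nbr_left y
          (hST a₀ (mem_of_mem_erase ha₀) y hyT (.inl (ne_of_mem_erase ha₀))),
          hST u huS y hyT (.inr hya)⟩

theorem IsCore.add_card_filter_deficient_le (hcore : IsCore r t A A' a₀ a₀')
    (hsat : NonEdgesComplete r s t) (hst : s ≤ t) {u : α}
    (hu : u ∈ deficient r s A A' ∪ surplus r s t A A') :
    t - 1 + #{v ∈ deficient (swap r) s A' A | r u v} ≤ #{v | r u v} := by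
  rcases mem_union.1 hu with hu | hu
  · have := hcore.le_card_filter_compl_deficient hsat hu
    have := card_filter_add_card_filter_compl (deficient (swap r) s A' A) (r u)
    omega
  · obtain ⟨⟨huA, huD⟩, hux⟩ : (u ∈ Aᶜ ∧ u ∉ deficient r s A A') ∧
        #{v ∈ deficient (swap r) s A' A | r u v} + (t - s) ≤ #{v ∈ A'ᶜ | r u v} := by
      simpa only [surplus, mem_filter, mem_sdiff] using hu
    have huA' : s - 1 ≤ #{v ∈ A' | r u v} := by simpa [deficient, huA] using huD
    have := card_filter_add_card_filter_compl A' (r u)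
    omega

theorem IsCore.mul_card_compl_add_sum_le (hcore : IsCore r t A A' a₀ a₀')
    (hsat : NonEdgesComplete r s t) (hst : s ≤ t) (hdeg : ∀ u, t - 1 ≤ #{v | r u v}) :
    (t - 1) * #Aᶜ + ∑ u ∈ deficient r s A A' ∪ surplus r s t A A',
        #{v ∈ deficient (swap r) s A' A | r u v} ≤ ∑ u ∈ Aᶜ, #{v | r u v} := by
  set DX := deficient r s A A' ∪ surplus r s t A A'
  calc _ = ∑ u ∈ Aᶜ,
        (t - 1 + if u ∈ DX then #{v ∈ deficient (swap r) s A' A | r u v} else 0) := by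
        rw [sum_add_distrib, sum_const, smul_eq_mul, sum_ite_mem,
          inter_eq_right.2 deficient_union_surplus_subset_compl, mul_comm]
    _ ≤ _ := sum_le_sum fun u _ => by
        split_ifs with hu
        · exact hcore.add_card_filter_deficient_le hsat hst hu
        · exact hdeg u

theorem not_hasCopyThrough_of_mem_poor (hst : s < t) {u : α} {v : β}
    (hu : u ∈ poor r s t A A') (hv : v ∈ poor (swap r) s t A' A) :
    ¬ HasCopyThrough r s t u v := by
  rintro ⟨S, T, hS, hT, huS, hvT, hST⟩
  set D' := deficient (swap r) s A' A
  -- `v` has fewer than `s - 1` neighbours in `A ∪ D ∪ X`, so some `x ∈ S \ {u}` lies outside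
  obtain ⟨x, hxS, hx⟩ :
      ∃ x ∈ S.erase u, x ∉ A ∪ deficient r s A A' ∪ surplus r s t A A' := by
    by_contra! h
    refine (mem_filter.1 hv).2.not_ge ?_
    calc s - 1 = #(S.erase u) := by rw [card_erase_of_mem huS, hS]
      _ ≤ _ := card_le_card fun x hx => mem_filter.2
        ⟨h x hx, hST x (mem_of_mem_erase hx) v hvT (.inl (ne_of_mem_erase hx))⟩
  obtain ⟨hxu, hxS⟩ := mem_erase.1 hxS
  have hxX : #{w ∈ A'ᶜ | r x w} < #{w ∈ D' | r x w} + (t - s) := by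
    simp only [mem_union, not_or] at hx
    obtain ⟨⟨hxA, hxD⟩, hxX⟩ := hx
    simpa [surplus, hxA, hxD] using hxX
  -- `u` is poor, so few of its neighbours in `T \ {v}` lie in `A' ∪ D'`; the others are
  -- neighbours of `x` outside `A' ∪ D'`, too many for `x ∉ X`
  have hin : #{w ∈ T.erase v | w ∈ A' ∪ D'} < s - 1 :=
    (card_le_card fun w hw => by
      obtain ⟨hwT, hw⟩ := mem_filter.1 hw
      exact mem_filter.2 ⟨mem_union_left _ hw,
        hST u huS w (mem_of_mem_erase hwT) (.inr (ne_of_mem_erase hwT))⟩).trans_lt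
      (mem_filter.1 hu).2
  have hout :
      #{w ∈ T.erase v | w ∉ A' ∪ D'} + #{w ∈ D' | r x w} ≤ #{w ∈ A'ᶜ | r x w} := by
    rw [← card_union_of_disjoint]
    · refine card_le_card (union_subset (fun w hw => ?_) (fun w hw => ?_))
      · obtain ⟨hwT, hw⟩ := mem_filter.1 hw
        exact mem_filter.2 ⟨mem_compl.2 fun h => hw (mem_union_left _ h),
          hST x hxS w (mem_of_mem_erase hwT) (.inl hxu)⟩
      · obtain ⟨hw, hxw⟩ := mem_filter.1 hw
        exact mem_filter.2 ⟨(mem_filter.1 hw).1, hxw⟩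
    · exact disjoint_left.2 fun w hw hw' =>
        (mem_filter.1 hw).2 (mem_union_right _ (mem_filter.1 hw').1)
  have hsplit := card_filter_add_card_filter_not (s := T.erase v) (· ∈ A' ∪ D')
  rw [card_erase_of_mem hvT, hT] at hsplit
  omega

theorem NonEdgesComplete.rel_of_mem_poor (hsat : NonEdgesComplete r s t) (hst : s < t)
    {u : α} {v : β} (hu : u ∈ poor r s t A A') (hv : v ∈ poor (swap r) s t A' A) :
    r u v := by
  by_contra huv
  rcases hsat u v huv with h | h
  · exact not_hasCopyThrough_of_mem_poor hst hu hv h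
  · exact not_hasCopyThrough_of_mem_poor (r := swap r) hst hv hu
      (hasCopyThrough_swap.2 h)

theorem NonEdgesComplete.le_card_filter_add_ite (hsat : NonEdgesComplete r s t) (hst : s < t)
    {v : β} (hv : v ∈ A'ᶜ) :
    s - 1 + (if v ∈ poor (swap r) s t A' A then #(poor r s t A A') else 0) ≤
      #{u ∈ A | r u v} + (if v ∈ deficient (swap r) s A' A then
          #{u ∈ deficient r s A A' ∪ surplus r s t A A' | r u v} else 0) +
        (if v ∈ poor (swap r) s t A' A then s - 1 else 0) := by
  by_cases hvD : v ∈ deficient (swap r) s A' A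
  · have hsplit : #{u ∈ A | r u v} + #{u ∈ deficient r s A A' ∪ surplus r s t A A' | r u v} =
        #{u ∈ A ∪ (deficient r s A A' ∪ surplus r s t A A') | r u v} := by
      rw [← card_union_of_disjoint (disjoint_filter_filter
        (subset_compl_iff_disjoint_left.1 deficient_union_surplus_subset_compl)), ← filter_union]
    by_cases hvC : v ∈ poor (swap r) s t A' A
    · have : #(poor r s t A A') ≤ #{u ∈ deficient r s A A' ∪ surplus r s t A A' | r u v} :=
        card_le_card fun u hu => mem_filter.2
          ⟨mem_union_left _ (filter_subset _ _ hu), hsat.rel_of_mem_poor hst hu hvC⟩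
      simp only [hvC, hvD, if_true]
      omega
    · have : s - 1 ≤ #{u ∈ A ∪ (deficient r s A A' ∪ surplus r s t A A') | r u v} := by
        simpa [poor, hvD, union_assoc, swap] using hvC
      simp only [hvC, hvD, if_true, if_false]
      omega
  · have hvC : v ∉ poor (swap r) s t A' A := fun h => hvD (filter_subset _ _ h)
    have : s - 1 ≤ #{u ∈ A | r u v} := by
      simpa [deficient, mem_compl.1 hv, swap] using hvD
    simp only [hvC, hvD, if_false]
    omega

theorem NonEdgesComplete.mul_card_compl_add_mul_le (hsat : NonEdgesComplete r s t) (hst : s < t) :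
    (s - 1) * #A'ᶜ + #(poor (swap r) s t A' A) * #(poor r s t A A') ≤
      ∑ v ∈ A'ᶜ, #{u ∈ A | r u v} + ∑ v ∈ deficient (swap r) s A' A,
          #{u ∈ deficient r s A A' ∪ surplus r s t A A' | r u v} +
        (s - 1) * #(poor (swap r) s t A' A) := by
  have hD' : deficient (swap r) s A' A ⊆ A'ᶜ := filter_subset _ _
  have hC' : poor (swap r) s t A' A ⊆ A'ᶜ := (filter_subset _ _).trans hD'
  calc _ = ∑ v ∈ A'ᶜ, (s - 1 + if v ∈ poor (swap r) s t A' A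
          then #(poor r s t A A') else 0) := by
        rw [sum_add_distrib, sum_const, smul_eq_mul, sum_ite_mem, inter_eq_right.2 hC',
          sum_const, smul_eq_mul, mul_comm]
    _ ≤ _ := sum_le_sum fun v hv => hsat.le_card_filter_add_ite hst hv
    _ = _ := by
        rw [sum_add_distrib, sum_add_distrib, sum_ite_mem, sum_ite_mem, inter_eq_right.2 hD',
          inter_eq_right.2 hC', sum_const, smul_eq_mul, mul_comm]

theorem IsCore.le_edgeCount_univ_add_of_card_poor_le (hcore : IsCore r t A A' a₀ a₀')
    (hsat : NonEdgesComplete r s t) (hst : s < t) (hdeg : ∀ u, t - 1 ≤ #{v | r u v})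
    (hpoor : #(poor (swap r) s t A' A) ≤ #(poor r s t A A')) :
    (t - 1) * #Aᶜ + (s - 1) * #A'ᶜ + edgeCount r A A' ≤
      edgeCount r univ univ + (s - 1) ^ 2 / 4 := by
  have hrow := hcore.mul_card_compl_add_sum_le hsat hst.le hdeg
  have hcol := hsat.mul_card_compl_add_mul_le (A := A) (A' := A') hst
  have hdouble := sum_card_filter_comm r (deficient r s A A' ∪ surplus r s t A A')
    (deficient (swap r) s A' A)
  have hamgm := mul_le_mul_add_sq_div_four hpoor (s - 1)
  rw [edgeCount_univ r A A']
  linarith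

theorem IsCore.le_edgeCount_univ_add (hcore : IsCore r t A A' a₀ a₀')
    (hsat : NonEdgesComplete r s t) (hst : s < t) (hαβ : Fintype.card α = Fintype.card β)
    (hdeg : ∀ u, t - 1 ≤ #{v | r u v}) (hdeg' : ∀ v, t - 1 ≤ #{u | r u v}) :
    (t - 1 + (s - 1)) * #Aᶜ + edgeCount r A A' ≤ edgeCount r univ univ + (s - 1) ^ 2 / 4 := by
  have hcompl : #A'ᶜ = #Aᶜ := by
    rw [card_compl, card_compl, hcore.card_left, hcore.card_right, hαβ]
  rcases le_total #(poor (swap r) s t A' A) #(poor r s t A A') with h | h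
  · have := hcore.le_edgeCount_univ_add_of_card_poor_le hsat hst hdeg h
    rw [hcompl] at this
    linarith
  · have := hcore.symm.le_edgeCount_univ_add_of_card_poor_le hsat.symm hst hdeg' h
    rw [hcompl] at this
    linarith [edgeCount_swap r A A', edgeCount_swap r univ univ]

end Partition

end BipartiteKst

open BipartiteKst

section FinBipartite

variable {n : ℕ} {E : Finset (Fin n × Fin n)}

theorem ContainsK.hasCopyThrough_of_insert {a b : ℕ} {u v : Fin n}
    (h : ContainsK n (insert (u, v) E) a b) (hfree : ¬ ContainsK n E a b) :
    HasCopyThrough (fun x y => (x, y) ∈ E) a b u v := by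
  obtain ⟨S, T, hS, hT, hST⟩ := h
  have hE : ∀ x ∈ S, ∀ y ∈ T, x ≠ u ∨ y ≠ v → (x, y) ∈ E := fun x hx y hy hxy =>
    (mem_insert.1 (hST x hx y hy)).resolve_left fun h => by
      obtain ⟨rfl, rfl⟩ := Prod.mk.inj h
      exact hxy.elim (· rfl) (· rfl)
  by_cases huv : u ∈ S ∧ v ∈ T
  · exact ⟨S, T, hS, hT, huv.1, huv.2, hE⟩
  · exact absurd ⟨S, T, hS, hT, fun x hx y hy => hE x hx y hy
      (not_and_or.1 fun h => huv ⟨h.1 ▸ hx, h.2 ▸ hy⟩)⟩ hfree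

theorem SaturatedKst.nonEdgesComplete {s t : ℕ} (hsat : SaturatedKst n E s t) :
    NonEdgesComplete (fun u v => (u, v) ∈ E) s t := fun u v huv =>
  (hsat.2 u v huv).imp (·.hasCopyThrough_of_insert fun h => hsat.1 (.inl h))
    (·.hasCopyThrough_of_insert fun h => hsat.1 (.inr h))

theorem card_eq_edgeCount : #E = edgeCount (fun u v => (u, v) ∈ E) univ univ := by
  congr 1
  ext
  simp

theorem card_filter_eq_edgeCount (A A' : Finset (Fin n)) :
    #{p ∈ E | p.1 ∈ A ∧ p.2 ∈ A'} = edgeCount (fun u v => (u, v) ∈ E) A A' := by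
  congr 1
  ext
  simp [and_comm]

theorem degU_eq_card_filter (u : Fin n) : degU n E u = #{v : Fin n | (u, v) ∈ E} := by
  have : {p ∈ E | p.1 = u} = {p ∈ {u} ×ˢ (univ : Finset (Fin n)) | (p.1, p.2) ∈ E} := by
    ext ⟨x, y⟩; simp [and_comm, eq_comm]
  rw [degU, this]
  exact (edgeCount_eq_sum (fun x y => (x, y) ∈ E) {u} univ).trans (sum_singleton _ u)

theorem degV_eq_card_filter (v : Fin n) : degV n E v = #{u : Fin n | (u, v) ∈ E} := by
  have : {p ∈ E | p.2 = v} = {p ∈ (univ : Finset (Fin n)) ×ˢ {v} | (p.1, p.2) ∈ E} := by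
    ext ⟨x, y⟩; simp [and_comm, eq_comm]
  rw [degV, this]
  exact (edgeCount_swap (fun x y => (x, y) ∈ E) univ {v}).symm.trans
    ((edgeCount_eq_sum _ {v} univ).trans (sum_singleton _ v))

end FinBipartite

theorem stmt12_general (s t n : ℕ) (hst : s < t) (hn : t ≤ n)
    (E : Finset (Fin n × Fin n)) (hsat : SaturatedKst n E s t)
    (hminU : ∀ u : Fin n, t - 1 ≤ degU n E u)
    (hminV : ∀ v : Fin n, t - 1 ≤ degV n E v)
    (A A' : Finset (Fin n)) (a₀ a₀' : Fin n)
    (hA : A.card = t - 1) (hA' : A'.card = t - 1)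
    (ha₀ : a₀ ∈ A) (ha₀' : a₀' ∈ A')
    (hNa₀ : ∀ v : Fin n, (a₀, v) ∈ E → v ∈ A')
    (hNa₀' : ∀ u : Fin n, (u, a₀') ∈ E → u ∈ A)
    (e : ℕ) (he : e = (E.filter (fun p => p.1 ∈ A ∧ p.2 ∈ A')).card) :
    (s + t - 2) * (n - t + 1) + e ≤ E.card + (s - 1) ^ 2 / 4 := by
  have hcore : IsCore (fun u v => (u, v) ∈ E) t A A' a₀ a₀' :=
    ⟨hA, hA', ha₀, ha₀', hNa₀, hNa₀'⟩
  have hbound := hcore.le_edgeCount_univ_add hsat.nonEdgesComplete hst rfl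
    (fun u => degU_eq_card_filter u ▸ hminU u) (fun v => degV_eq_card_filter v ▸ hminV v)
  have hcompl : #Aᶜ = n - t + 1 := by
    rw [card_compl, Fintype.card_fin, hA]
    omega
  rw [← card_eq_edgeCount, ← card_filter_eq_edgeCount, ← he, hcompl] at hbound
  calc (s + t - 2) * (n - t + 1) + e ≤ (t - 1 + (s - 1)) * (n - t + 1) + e := by
        gcongr
        omega
    _ ≤ #E + (s - 1) ^ 2 / 4 := hbound

/-- Claim 2.3 of GKS / Claim 4.8: a `K_{s,t}`-saturated `n` by
`n` bipartite graph with minimum degree at least `t-1` containing a core with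
`e` edges has at least `(s+t-2)(n-t+1) - ⌊(s-1)²/4⌋ + e` edges. -/
theorem stmt12 (s t n : ℕ) (hs : 1 ≤ s) (hst : s < t) (hn : t ≤ n)
    (E : Finset (Fin n × Fin n)) (hsat : SaturatedKst n E s t)
    (hminU : ∀ u : Fin n, t - 1 ≤ degU n E u)
    (hminV : ∀ v : Fin n, t - 1 ≤ degV n E v)
    (A A' : Finset (Fin n)) (a₀ a₀' : Fin n)
    (hA : A.card = t - 1) (hA' : A'.card = t - 1)
    (ha₀ : a₀ ∈ A) (ha₀' : a₀' ∈ A')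
    (hNa₀ : ∀ v : Fin n, (a₀, v) ∈ E → v ∈ A')
    (hNa₀' : ∀ u : Fin n, (u, a₀') ∈ E → u ∈ A)
    (e : ℕ) (he : e = (E.filter (fun p => p.1 ∈ A ∧ p.2 ∈ A')).card) :
    (s + t - 2) * (n - t + 1) + e ≤ E.card + (s - 1) ^ 2 / 4 :=
  stmt12_general s t n hst hn E hsat hminU hminV A A' a₀ a₀' hA hA' ha₀ ha₀' hNa₀ hNa₀' e he
end

section
/- Every n by n bipartite graph that is K_{1,t}-saturated (t ≥ 2) has at least (t-1)n - ⌊((t-1)/2)²⌋ edges for sufficiently large n, i.e., Conjecture 1.1 holds for s = 1. -/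
open Finset

/-- AM-GM for naturals. -/
lemma aux_amgm (x d : ℕ) (h : x ≤ d) : x * (d - x) ≤ d ^ 2 / 4 := by
  rw [Nat.le_div_iff_mul_le (by norm_num)]
  obtain ⟨c, rfl⟩ := Nat.exists_eq_add_of_le h
  rw [Nat.add_sub_cancel_left]
  nlinarith [two_mul_le_add_sq x c]

/-- Key arithmetic step. -/
lemma aux_arith (a b d n q : ℕ) (han : a ≤ n) (hbd : b ≤ d) (hab : a ≤ b)
    (hq : a * (d - a) ≤ q) : d * n ≤ (n - a) * d + a * b + q := by
  have h1 : a * d = a * b + a * (d - b) := by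
    rw [← Nat.mul_add, Nat.add_sub_cancel' hbd]
  have h2 : a * (d - b) ≤ a * (d - a) := Nat.mul_le_mul_left a (Nat.sub_le_sub_left hab d)
  have h3 : d * n = (n - a) * d + a * d := by
    rw [← Nat.add_mul, Nat.sub_add_cancel han, Nat.mul_comm]
  linarith

/-- A set of common neighbors bounds the `U`-degree from below. -/
lemma aux_degU_lb {n : ℕ} {E : Finset (Fin n × Fin n)} {u : Fin n} {B : Finset (Fin n)}
    (h : ∀ v ∈ B, (u, v) ∈ E) : B.card ≤ degU n E u := by
  apply Finset.card_le_card_of_injOn (fun v => (u, v))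
  · intro v hv
    exact Finset.mem_filter.2 ⟨h v hv, rfl⟩
  · intro x _ y _ hxy
    exact congrArg Prod.snd hxy

/-- A set of common neighbors bounds the `U'`-degree from below. -/
lemma aux_degV_lb {n : ℕ} {E : Finset (Fin n × Fin n)} {v : Fin n} {A : Finset (Fin n)}
    (h : ∀ u ∈ A, (u, v) ∈ E) : A.card ≤ degV n E v := by
  apply Finset.card_le_card_of_injOn (fun u => (u, v))
  · intro u hu
    exact Finset.mem_filter.2 ⟨h u hu, rfl⟩
  · intro x _ y _ hxy
    exact congrArg Prod.fst hxy

/-- In a `K_{1,t}`-free graph, every `U`-degree is at most `t - 1`. -/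
lemma aux_degU_le {n t : ℕ} (ht : 1 ≤ t) {E : Finset (Fin n × Fin n)}
    (hfree : ¬ ContainsKst n E 1 t) (u : Fin n) : degU n E u ≤ t - 1 := by
  by_contra h
  push_neg at h
  have ht' : t ≤ degU n E u := by omega
  have hcard : ((E.filter (fun p => p.1 = u)).image Prod.snd).card
      = degU n E u := by
    apply Finset.card_image_of_injOn
    intro p hp q hq hpq
    simp only [Finset.mem_coe, Finset.mem_filter] at hp hq
    exact Prod.ext (hp.2.trans hq.2.symm) hpq
  obtain ⟨T, hTsub, hT⟩ :=
    Finset.exists_subset_card_eq (hcard ▸ ht')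
  refine hfree (Or.inl ⟨{u}, T, Finset.card_singleton u, hT, ?_⟩)
  intro a ha v hv
  rw [Finset.mem_singleton] at ha
  subst ha
  obtain ⟨p, hp, hpv⟩ := Finset.mem_image.1 (hTsub hv)
  rw [Finset.mem_filter] at hp
  have hpe : p = (a, v) := Prod.ext hp.2 hpv
  rw [← hpe]
  exact hp.1

/-- In a `K_{1,t}`-free graph, every `U'`-degree is at most `t - 1`. -/
lemma aux_degV_le {n t : ℕ} (ht : 1 ≤ t) {E : Finset (Fin n × Fin n)}
    (hfree : ¬ ContainsKst n E 1 t) (v : Fin n) : degV n E v ≤ t - 1 := by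
  by_contra h
  push_neg at h
  have ht' : t ≤ degV n E v := by omega
  have hcard : ((E.filter (fun p => p.2 = v)).image Prod.fst).card
      = degV n E v := by
    apply Finset.card_image_of_injOn
    intro p hp q hq hpq
    simp only [Finset.mem_coe, Finset.mem_filter] at hp hq
    exact Prod.ext hpq (hp.2.trans hq.2.symm)
  obtain ⟨S, hSsub, hS⟩ :=
    Finset.exists_subset_card_eq (hcard ▸ ht')
  refine hfree (Or.inr ⟨S, {v}, hS, Finset.card_singleton v, ?_⟩)
  intro a ha w hw
  rw [Finset.mem_singleton] at hw
  subst hw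
  obtain ⟨p, hp, hpa⟩ := Finset.mem_image.1 (hSsub ha)
  rw [Finset.mem_filter] at hp
  have hpe : p = (a, w) := Prod.ext hpa hp.2
  rw [← hpe]
  exact hp.1

/-- In a saturated graph, two deficient vertices must be adjacent. -/
lemma aux_mem_of_small {n t : ℕ} (ht : 2 ≤ t) {E : Finset (Fin n × Fin n)}
    (hsat : SaturatedKst n E 1 t) {u v : Fin n}
    (hu : degU n E u ≤ t - 2) (hv : degV n E v ≤ t - 2) : (u, v) ∈ E := by
  by_contra hne
  rcases hsat.2 u v hne with ⟨S, T, hS, hT, h⟩ | ⟨S, T, hS, hT, h⟩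
  · obtain ⟨u₀, rfl⟩ := Finset.card_eq_one.1 hS
    by_cases hc : u₀ = u ∧ v ∈ T
    · -- the new edge was used: degU u ≥ t - 1
      have hlb : (T.erase v).card ≤ degU n E u := by
        apply aux_degU_lb
        intro w hw
        rw [Finset.mem_erase] at hw
        have hm := h u₀ (Finset.mem_singleton_self u₀) w hw.2
        rw [hc.1] at hm
        rcases Finset.mem_insert.1 hm with h' | h'
        · exact absurd (congrArg Prod.snd h') hw.1
        · exact h'
      rw [Finset.card_erase_of_mem hc.2, hT] at hlb
      omega
    · -- the new edge was not used: contradiction with freeness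
      apply hsat.1
      refine Or.inl ⟨{u₀}, T, hS, hT, ?_⟩
      intro a ha w hw
      have hm := h a ha w hw
      rcases Finset.mem_insert.1 hm with h' | h'
      · exfalso
        apply hc
        rw [Finset.mem_singleton] at ha
        have h1 : a = u := congrArg Prod.fst h'
        have h2 : w = v := congrArg Prod.snd h'
        exact ⟨ha ▸ h1, h2 ▸ hw⟩
      · exact h'
  · obtain ⟨v₀, rfl⟩ := Finset.card_eq_one.1 hT
    by_cases hc : v₀ = v ∧ u ∈ S
    · have hlb : (S.erase u).card ≤ degV n E v := by
        apply aux_degV_lb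
        intro w hw
        rw [Finset.mem_erase] at hw
        have hm := h w hw.2 v₀ (Finset.mem_singleton_self v₀)
        rw [hc.1] at hm
        rcases Finset.mem_insert.1 hm with h' | h'
        · exact absurd (congrArg Prod.fst h') hw.1
        · exact h'
      rw [Finset.card_erase_of_mem hc.2, hS] at hlb
      omega
    · apply hsat.1
      refine Or.inr ⟨S, {v₀}, hS, hT, ?_⟩
      intro a ha w hw
      have hm := h a ha w hw
      rcases Finset.mem_insert.1 hm with h' | h'
      · exfalso
        apply hc
        rw [Finset.mem_singleton] at hw
        have h1 : a = u := congrArg Prod.fst h'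
        have h2 : w = v := congrArg Prod.snd h'
        exact ⟨hw ▸ h2, h1 ▸ ha⟩
      · exact h'

/-- Conjecture 1.1 holds for `s = 1`: for every `t ≥ 2` and all
sufficiently large `n`, every `K_{1,t}`-saturated `n` by `n` bipartite graph
has at least `(t-1)n - ⌊((t-1)/2)²⌋ = (t-1)n - ⌊(t-1)²/4⌋` edges. -/
theorem stmt18 (t : ℕ) (ht : 2 ≤ t) :
    ∃ N : ℕ, ∀ n : ℕ, N ≤ n →
      ∀ E : Finset (Fin n × Fin n), SaturatedKst n E 1 t →
        (t - 1) * n ≤ E.card + (t - 1) ^ 2 / 4 := by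
  refine ⟨0, fun n _ E hsat => ?_⟩
  set d := t - 1 with hd
  have ht1 : 1 ≤ t := by omega
  have hfree := hsat.1
  have hEU : E.card = ∑ u : Fin n, degU n E u :=
    Finset.card_eq_sum_card_fiberwise (fun p _ => Finset.mem_univ p.1)
  have hEV : E.card = ∑ v : Fin n, degV n E v :=
    Finset.card_eq_sum_card_fiberwise (fun p _ => Finset.mem_univ p.2)
  set A := Finset.univ.filter (fun u => degU n E u ≤ t - 2) with hA
  set B := Finset.univ.filter (fun v => degV n E v ≤ t - 2) with hB
  have hAmem : ∀ u ∈ A, degU n E u ≤ t - 2 := fun u hu => (Finset.mem_filter.1 hu).2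
  have hBmem : ∀ v ∈ B, degV n E v ≤ t - 2 := fun v hv => (Finset.mem_filter.1 hv).2
  have hAc : ∀ u ∉ A, d ≤ degU n E u := by
    intro u hu
    rw [hA, Finset.mem_filter] at hu
    push_neg at hu
    have := hu (Finset.mem_univ u)
    omega
  have hBc : ∀ v ∉ B, d ≤ degV n E v := by
    intro v hv
    rw [hB, Finset.mem_filter] at hv
    push_neg at hv
    have := hv (Finset.mem_univ v)
    omega
  rcases Finset.eq_empty_or_nonempty A with hAe | hAne
  · -- every U-degree is d
    have : d * n ≤ E.card := by
      rw [hEU]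
      calc d * n = ∑ _u : Fin n, d := by simp [mul_comm]
        _ ≤ ∑ u : Fin n, degU n E u :=
          Finset.sum_le_sum (fun u _ => hAc u (by simp [hAe]))
    omega
  rcases Finset.eq_empty_or_nonempty B with hBe | hBne
  · have : d * n ≤ E.card := by
      rw [hEV]
      calc d * n = ∑ _v : Fin n, d := by simp [mul_comm]
        _ ≤ ∑ v : Fin n, degV n E v :=
          Finset.sum_le_sum (fun v _ => hBc v (by simp [hBe]))
    omega
  · -- both sides have deficient vertices
    have hAB : ∀ u ∈ A, ∀ v ∈ B, (u, v) ∈ E := fun u hu v hv =>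
      aux_mem_of_small ht hsat (hAmem u hu) (hBmem v hv)
    have hdegA : ∀ u ∈ A, B.card ≤ degU n E u := fun u hu =>
      aux_degU_lb (fun v hv => hAB u hu v hv)
    have hdegB : ∀ v ∈ B, A.card ≤ degV n E v := fun v hv =>
      aux_degV_lb (fun u hu => hAB u hu v hv)
    obtain ⟨u₁, hu₁⟩ := hAne
    obtain ⟨v₁, hv₁⟩ := hBne
    have hbd : B.card ≤ t - 2 := le_trans (hdegA u₁ hu₁) (hAmem u₁ hu₁)
    have had : A.card ≤ t - 2 := le_trans (hdegB v₁ hv₁) (hBmem v₁ hv₁)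
    have han : A.card ≤ n := le_trans (Finset.card_le_univ A) (by simp)
    have hbn : B.card ≤ n := le_trans (Finset.card_le_univ B) (by simp)
    have hsum1 : (n - A.card) * d + A.card * B.card ≤ E.card := by
      rw [hEU, ← Finset.sum_filter_add_sum_filter_not Finset.univ
        (fun u => degU n E u ≤ t - 2)]
      rw [← hA]
      have hcardc : (Finset.univ.filter (fun u => ¬ degU n E u ≤ t - 2)).card
          = n - A.card := by
        have := Finset.card_filter_add_card_filter_not
          (s := (Finset.univ : Finset (Fin n))) (p := fun u => degU n E u ≤ t - 2)
        rw [← hA] at this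
        simp only [Finset.card_univ, Fintype.card_fin] at this
        omega
      have h1 : A.card * B.card ≤ ∑ u ∈ A, degU n E u := by
        calc A.card * B.card = ∑ _u ∈ A, B.card := by simp [mul_comm]
          _ ≤ ∑ u ∈ A, degU n E u := Finset.sum_le_sum hdegA
      have h2 : (n - A.card) * d
          ≤ ∑ u ∈ Finset.univ.filter (fun u => ¬ degU n E u ≤ t - 2), degU n E u := by
        calc (n - A.card) * d
            = ∑ _u ∈ Finset.univ.filter (fun u => ¬ degU n E u ≤ t - 2), d := by
              rw [Finset.sum_const, smul_eq_mul, hcardc]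
          _ ≤ _ := Finset.sum_le_sum (fun u hu => hAc u (by
              rw [Finset.mem_filter] at hu
              rw [hA, Finset.mem_filter]
              tauto))
      omega
    have hsum2 : (n - B.card) * d + A.card * B.card ≤ E.card := by
      rw [hEV, ← Finset.sum_filter_add_sum_filter_not Finset.univ
        (fun v => degV n E v ≤ t - 2)]
      rw [← hB]
      have hcardc : (Finset.univ.filter (fun v => ¬ degV n E v ≤ t - 2)).card
          = n - B.card := by
        have := Finset.card_filter_add_card_filter_not
          (s := (Finset.univ : Finset (Fin n))) (p := fun v => degV n E v ≤ t - 2)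
        rw [← hB] at this
        simp only [Finset.card_univ, Fintype.card_fin] at this
        omega
      have h1 : A.card * B.card ≤ ∑ v ∈ B, degV n E v := by
        calc A.card * B.card = ∑ _v ∈ B, A.card := by simp [mul_comm]
          _ ≤ ∑ v ∈ B, degV n E v := Finset.sum_le_sum hdegB
      have h2 : (n - B.card) * d
          ≤ ∑ v ∈ Finset.univ.filter (fun v => ¬ degV n E v ≤ t - 2), degV n E v := by
        calc (n - B.card) * d
            = ∑ _v ∈ Finset.univ.filter (fun v => ¬ degV n E v ≤ t - 2), d := by
              rw [Finset.sum_const, smul_eq_mul, hcardc]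
          _ ≤ _ := Finset.sum_le_sum (fun v hv => hBc v (by
              rw [Finset.mem_filter] at hv
              rw [hB, Finset.mem_filter]
              tauto))
      omega
    rcases le_total A.card B.card with hab | hab
    · have key := aux_arith A.card B.card d n (d ^ 2 / 4) han (by omega) hab
        (aux_amgm A.card d (by omega))
      calc d * n ≤ (n - A.card) * d + A.card * B.card + d ^ 2 / 4 := key
        _ ≤ E.card + d ^ 2 / 4 := by omega
    · have key := aux_arith B.card A.card d n (d ^ 2 / 4) hbn (by omega) hab
        (aux_amgm B.card d (by omega))
      calc d * n ≤ (n - B.card) * d + B.card * A.card + d ^ 2 / 4 := key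
        _ ≤ E.card + d ^ 2 / 4 := by
          rw [Nat.mul_comm B.card A.card]
          omega
end
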